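/- arXiv:0912.0577 — 11 statements merged into one kernel-verified Lean document; each statement's English description precedes it below -/
import Mathlib

section
/- Let ν be a real number and let Ψ : ℕ × ℕ → ℝ be a doubly indexed family satisfying: Ψ(0,n) = 1 for all n ≥ 0; Ψ(m,n) = 0 whenever m > n; and the recurrence Ψ(m,n) = (ν + 2n−m−1)·Ψ(m−1,n−1) + Ψ(m,n−1) for all 1 ≤ m ≤ n. Then for all 0 ≤ m ≤ n with n ≥ 1, Ψ(m,n) = C(n,m) · ∏_{i=1}^{m} (ν + n−i). -/
open Finset

lemma shift_prod (ν : ℝ) (n k : ℕ) :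
    ∏ i ∈ Finset.Icc 1 (k+1), (ν + ((n:ℝ)+1) - (i:ℝ))
      = (ν + n) * ∏ i ∈ Finset.Icc 1 k, (ν + (n:ℝ) - (i:ℝ)) := by
  induction k with
  | zero => simp; ring
  | succ k ih =>
      rw [Finset.prod_Icc_succ_top (by omega : 1 ≤ k+1+1), ih,
          Finset.prod_Icc_succ_top (by omega : 1 ≤ k+1)]
      push_cast
      ring

theorem stmt_1 (ν : ℝ) (Ψ : ℕ × ℕ → ℝ)
    (h0 : ∀ n : ℕ, Ψ (0, n) = 1)
    (hgt : ∀ m n : ℕ, n < m → Ψ (m, n) = 0)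
    (hrec : ∀ m n : ℕ, 1 ≤ m → m ≤ n →
      Ψ (m, n) = (ν + 2 * (n : ℝ) - (m : ℝ) - 1) * Ψ (m - 1, n - 1) + Ψ (m, n - 1)) :
    ∀ m n : ℕ, m ≤ n → 1 ≤ n →
      Ψ (m, n) = (n.choose m : ℝ) * ∏ i ∈ Finset.Icc 1 m, (ν + (n : ℝ) - (i : ℝ)) := by
  have main : ∀ n : ℕ, 1 ≤ n → ∀ m : ℕ, m ≤ n →
      Ψ (m, n) = (n.choose m : ℝ) * ∏ i ∈ Finset.Icc 1 m, (ν + (n : ℝ) - (i : ℝ)) := by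
    intro n hn
    induction n, hn using Nat.le_induction with
    | base =>
        intro m hm
        interval_cases m
        · simp [h0]
        · have e0 : Ψ (0, 0) = 1 := h0 0
          have e1 : Ψ (1, 0) = 0 := hgt 1 0 (by omega)
          rw [hrec 1 1 le_rfl le_rfl]
          simp only [Nat.sub_self]
          rw [e0, e1]
          norm_num
          ring
    | succ n hn ih =>
        intro m hm
        match m with
        | 0 => simp [h0]
        | k + 1 =>
          have hk : k ≤ n := by omega
          have hrw := hrec (k+1) (n+1) (by omega) (by omega)
          simp only [Nat.add_sub_cancel] at hrw
          have hA : Ψ (k, n) = (n.choose k : ℝ) * ∏ i ∈ Finset.Icc 1 k, (ν + (n:ℝ) - (i:ℝ)) :=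
            by
              rcases Nat.eq_zero_or_pos n with h | h
              · have hk0 : k = 0 := by omega
                subst hk0
                simp [h0]
              · exact ih k hk
          have hB : Ψ (k+1, n) = (n.choose (k+1) : ℝ) *
              ∏ i ∈ Finset.Icc 1 (k+1), (ν + (n:ℝ) - (i:ℝ)) := by
            rcases Nat.lt_or_ge n (k+1) with h | h
            · have hkn : k = n := by omega
              rw [hgt (k+1) n (by omega), hkn, Nat.choose_succ_self]
              simp
            · exact ih (k+1) h
          rw [hrw, hA, hB]
          have hchoose : ((n+1).choose (k+1) : ℝ) = (n.choose k : ℝ) + (n.choose (k+1) : ℝ) := by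
            rw [Nat.choose_succ_succ]; push_cast; ring
          have hkey : (n.choose (k+1) : ℝ) * ((k:ℝ)+1) = (n.choose k : ℝ) * ((n:ℝ) - (k:ℝ)) := by
            have h2 : ((n.choose (k+1) * (k+1) : ℕ) : ℝ) = ((n.choose k * (n - k) : ℕ) : ℝ) := by
              exact_mod_cast congrArg (Nat.cast (R := ℝ)) (Nat.choose_succ_right_eq n k)
            push_cast [Nat.cast_sub hk] at h2
            exact h2
          push_cast
          rw [shift_prod ν n k, Finset.prod_Icc_succ_top (by omega : 1 ≤ k+1), hchoose]
          push_cast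
          linear_combination (-(∏ i ∈ Finset.Icc 1 k, (ν + (n:ℝ) - (i:ℝ)))) * hkey
  intro m n hm hn
  exact main n hn m hm
end

section
/- Let ν ≥ 1 be a natural number and let a, b, c be nonnegative integers. For t = 1,…,ν let (x_t, y_t) be independent pairs of independent standard Gaussian random variables. Then the expectation (i.e., the integral over (Fin ν) → ℝ × ℝ with respect to the product of the measures gaussianReal 0 1 × gaussianReal 0 1) satisfies E[(Σ_{t=1}^{ν} x_t y_t)^{2a} · (Σ_{t=1}^{ν} x_t²)^b · (Σ_{t=1}^{ν} y_t²)^c] = (2a−1)!! · ∏_{i=1}^{a} (ν + 2(a−i)) · ∏_{i=1}^{b} (ν + 2(a+b−i)) · ∏_{i=1}^{c} (ν + 2(a+c−i)). -/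
open MeasureTheory ProbabilityTheory Finset Real Filter

noncomputable section
namespace Stmt3Aux

abbrev γ : Measure ℝ := gaussianReal 0 1
abbrev π2 : Measure (ℝ × ℝ) := γ.prod γ
abbrev μp (n : ℕ) : Measure (Fin n → ℝ × ℝ) := Measure.pi fun _ => π2

def phi (x : ℝ) : ℝ := gaussianPDFReal 0 1 x

lemma phi_def (x : ℝ) : phi x = (Real.sqrt (2 * π))⁻¹ * Real.exp (-(x^2) / 2) := by
  simp only [phi, gaussianPDFReal, NNReal.coe_one, mul_one, sub_zero]

lemma phi_nonneg (x : ℝ) : 0 ≤ phi x := gaussianPDFReal_nonneg 0 1 x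

lemma measurable_phi : Measurable phi := measurable_gaussianPDFReal 0 1

lemma continuous_phi : Continuous phi := by
  have : phi = fun x => (Real.sqrt (2 * π))⁻¹ * Real.exp (-(x^2) / 2) := funext phi_def
  rw [this]; fun_prop

lemma gamma_eq : γ = (volume : Measure ℝ).withDensity (fun x => ENNReal.ofReal (phi x)) := by
  rw [show γ = gaussianReal 0 1 from rfl, gaussianReal_of_var_ne_zero 0 one_ne_zero]
  rfl

lemma integral_gamma (g : ℝ → ℝ) : ∫ x, g x ∂γ = ∫ x, phi x * g x := by
  rw [gamma_eq]
  have h : (fun x => ENNReal.ofReal (phi x)) = (fun x => ((Real.toNNReal (phi x) : NNReal) : ENNReal)) := by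
    ext x; simp [ENNReal.ofReal]
  rw [h, integral_withDensity_eq_integral_smul (measurable_phi.real_toNNReal)]
  congr 1; ext x
  simp [NNReal.smul_def, Real.coe_toNNReal _ (phi_nonneg x)]

lemma integrable_gamma_iff {g : ℝ → ℝ} (hg : AEStronglyMeasurable g γ) :
    Integrable g γ ↔ Integrable (fun x => phi x * g x) := by
  rw [gamma_eq] at hg ⊢
  rw [integrable_withDensity_iff (measurable_phi.ennreal_ofReal) (Filter.Eventually.of_forall fun x => ENNReal.ofReal_lt_top)]
  constructor
  · intro h; refine h.congr (Filter.Eventually.of_forall fun x => ?_)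
    simp only [ENNReal.toReal_ofReal (phi_nonneg x)]; ring
  · intro h; refine h.congr (Filter.Eventually.of_forall fun x => ?_)
    simp only [ENNReal.toReal_ofReal (phi_nonneg x)]; ring

lemma one_add_abs_le_exp (x : ℝ) : 1 + |x| ≤ Real.exp |x| :=
  Real.add_one_le_exp _ |>.trans_eq' (by ring_nf)

lemma integrable_one_add_abs_pow (k : ℕ) : Integrable (fun x => (1 + |x|)^k) γ := by
  rw [integrable_gamma_iff (g := fun x : ℝ => (1 + |x|)^k) ((continuous_const.add continuous_abs).pow k).aestronglyMeasurable]
  have hint : Integrable (fun x : ℝ => ((Real.sqrt (2*π))⁻¹ * Real.exp ((k:ℝ)^2)) * Real.exp (-(1/4 : ℝ) * x^2)) volume :=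
    (integrable_exp_neg_mul_sq (by norm_num)).const_mul _
  refine hint.mono' ((continuous_phi.mul ((continuous_const.add continuous_abs).pow k)).aestronglyMeasurable) (ae_of_all _ fun x => ?_)
  have h0 : 0 ≤ phi x * (1 + |x|)^k := by
    apply mul_nonneg (phi_nonneg x); positivity
  rw [Real.norm_eq_abs, abs_of_nonneg h0, phi_def]
  have h1 : (1 + |x|)^k ≤ Real.exp ((k:ℝ) * |x|) := by
    calc (1 + |x|)^k ≤ (Real.exp |x|)^k := by
          apply pow_le_pow_left₀ (by positivity) (one_add_abs_le_exp x)
      _ = Real.exp ((k:ℝ) * |x|) := by rw [← Real.exp_nat_mul]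
  have h2 : (k:ℝ) * |x| - x^2/2 ≤ (k:ℝ)^2 - x^2/4 := by
    nlinarith [sq_nonneg (|x|/2 - (k:ℝ)), sq_abs x]
  calc (Real.sqrt (2*π))⁻¹ * Real.exp (-(x^2)/2) * (1 + |x|)^k
      ≤ (Real.sqrt (2*π))⁻¹ * Real.exp (-(x^2)/2) * Real.exp ((k:ℝ)*|x|) := by
        apply mul_le_mul_of_nonneg_left h1; positivity
    _ = (Real.sqrt (2*π))⁻¹ * Real.exp ((k:ℝ)*|x| - x^2/2) := by
        rw [mul_assoc, ← Real.exp_add]; ring_nf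
    _ ≤ (Real.sqrt (2*π))⁻¹ * Real.exp ((k:ℝ)^2 - x^2/4) := by
        apply mul_le_mul_of_nonneg_left (Real.exp_le_exp.2 h2); positivity
    _ = (Real.sqrt (2*π))⁻¹ * Real.exp ((k:ℝ)^2) * Real.exp (-(1/4:ℝ)*x^2) := by
        rw [mul_assoc, ← Real.exp_add]; ring_nf

lemma integrable_gamma_dom {g : ℝ → ℝ} (hg : AEStronglyMeasurable g γ) (C : ℝ) (k : ℕ)
    (hb : ∀ x, |g x| ≤ C * (1+|x|)^k) : Integrable g γ := by
  refine ((integrable_one_add_abs_pow k).const_mul C).mono' hg (ae_of_all _ fun x => ?_)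
  exact (hb x).trans_eq' (Real.norm_eq_abs _).symm

/-! ### Stein's lemma in one dimension -/

lemma hasDerivAt_phi (x : ℝ) : HasDerivAt phi (-x * phi x) x := by
  have h : HasDerivAt (fun x : ℝ => (Real.sqrt (2 * π))⁻¹ * Real.exp (-(x^2) / 2))
      ((Real.sqrt (2 * π))⁻¹ * (Real.exp (-(x^2) / 2) * (-(2*x)/2))) x := by
    have h1 : HasDerivAt (fun x : ℝ => -(x^2) / 2) (-(2*x)/2) x := by
      have := (hasDerivAt_pow 2 x).neg.div_const 2
      simpa using this
    exact (h1.exp).const_mul _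
  have h2 : (fun x : ℝ => (Real.sqrt (2 * π))⁻¹ * Real.exp (-(x^2) / 2)) = phi := by
    ext y; rw [phi_def]
  rw [h2] at h
  convert h using 1
  rw [phi_def]; ring

lemma stein1 {u u' : ℝ → ℝ} (hu : ∀ x, HasDerivAt u (u' x) x)
    (hxu : Integrable (fun x => x * u x) γ) (hiu : Integrable u γ) (hiu' : Integrable u' γ) :
    ∫ x, x * u x ∂γ = ∫ x, u' x ∂γ := by
  have key := integral_mul_deriv_eq_deriv_mul_of_integrable
    (u := u) (u' := u') (v := fun x => -phi x) (v' := fun x => x * phi x)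
    (fun x _ => hu x) (fun x _ => by exact (hasDerivAt_phi x).neg.congr_deriv (by ring))
    ?_ ?_ ?_
  · rw [integral_gamma (fun x => x * u x), integral_gamma u']
    calc ∫ x, phi x * (x * u x) = ∫ x, u x * (x * phi x) := by congr 1; ext x; ring
      _ = - ∫ x, u' x * (-phi x) := key
      _ = ∫ x, phi x * u' x := by
          rw [← integral_neg]; congr 1; ext x; ring
  · have := (integrable_gamma_iff hxu.1).1 hxu
    refine this.congr (ae_of_all _ fun x => ?_)
    show phi x * (x * u x) = (u * fun x => x * phi x) x
    simp only [Pi.mul_apply]; ring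
  · have := ((integrable_gamma_iff hiu'.1).1 hiu').neg
    refine this.congr (ae_of_all _ fun x => ?_)
    show -(phi x * u' x) = (u' * fun x => -phi x) x
    simp only [Pi.mul_apply]; ring
  · have := ((integrable_gamma_iff hiu.1).1 hiu).neg
    refine this.congr (ae_of_all _ fun x => ?_)
    show -(phi x * u x) = (u * fun x => -phi x) x
    simp only [Pi.mul_apply]; ring

/-! ### Polynomial integrability -/

lemma integrable_pow_gamma (m : ℕ) : Integrable (fun x : ℝ => x^m) γ := by
  refine integrable_gamma_dom (by fun_prop) 1 m fun x => ?_
  rw [one_mul, abs_pow]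
  exact pow_le_pow_left₀ (abs_nonneg x) (by linarith) m

lemma integrable_eval_gamma (P : Polynomial ℝ) : Integrable (fun x => P.eval x) γ := by
  induction P using Polynomial.induction_on' with
  | add p q hp hq => exact (hp.add hq).congr (ae_of_all _ fun x => by simp)
  | monomial m a =>
    have := (integrable_pow_gamma m).const_mul a
    exact this.congr (ae_of_all _ fun x => by simp [Polynomial.eval_monomial])

lemma integrable_gamma_of_polyeq (P : Polynomial ℝ) (g : ℝ → ℝ)
    (h : ∀ x, Polynomial.eval x P = g x) : Integrable g γ :=
  (integrable_eval_gamma P).congr (ae_of_all _ h)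

/-- coordinates of a pair indexed by Bool -/
def pc (z : ℝ × ℝ) (b : Bool) : ℝ := if b then z.2 else z.1

lemma integrable_eval_pair (Q : MvPolynomial Bool ℝ) :
    Integrable (fun z : ℝ × ℝ => MvPolynomial.eval (pc z) Q) π2 := by
  have key : ∀ z : ℝ × ℝ, MvPolynomial.eval (pc z) Q
      = ∑ v ∈ Q.support, MvPolynomial.coeff v Q * (z.1 ^ v false * z.2 ^ v true) := by
    intro z
    conv_lhs => rw [Q.as_sum]
    rw [map_sum]
    refine Finset.sum_congr rfl fun v _ => ?_
    rw [MvPolynomial.eval_monomial, Finsupp.prod_pow]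
    simp [pc, Fintype.prod_bool, mul_comm]
  refine (integrable_finset_sum _ fun v _ => ?_).congr (ae_of_all _ fun z => (key z).symm)
  exact (((integrable_pow_gamma (v false)).mul_prod (integrable_pow_gamma (v true))).const_mul _)

lemma integrable_pair_of_polyeq (Q : MvPolynomial Bool ℝ) (g : ℝ × ℝ → ℝ)
    (h : ∀ z, MvPolynomial.eval (pc z) Q = g z) : Integrable g π2 :=
  (integrable_eval_pair Q).congr (ae_of_all _ h)

lemma integrable_prod_pi {n : ℕ} (f : Fin n → ℝ × ℝ → ℝ) (hf : ∀ t, Integrable (f t) π2) :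
    Integrable (fun ω : Fin n → ℝ × ℝ => ∏ t, f t (ω t)) (μp n) := by
  induction n with
  | zero =>
    simp only [Finset.univ_eq_empty, Finset.prod_empty]
    exact integrable_const 1
  | succ n ih =>
    have h := (measurePreserving_piFinSuccAbove (fun _ : Fin (n+1) => π2) 0).symm
    rw [show (μp (n+1)) = Measure.pi (fun _ : Fin (n+1) => π2) from rfl,
      ← h.integrable_comp_emb (MeasurableEquiv.measurableEmbedding _)]
    have heq : ((fun ω : Fin (n+1) → ℝ×ℝ => ∏ t, f t (ω t)) ∘
        (MeasurableEquiv.piFinSuccAbove (fun _ => ℝ×ℝ) 0).symm) =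
        fun z : (ℝ×ℝ) × (Fin n → ℝ×ℝ) => f 0 z.1 * ∏ t : Fin n, f t.succ (z.2 t) := by
      ext z
      simp only [Function.comp_apply, MeasurableEquiv.piFinSuccAbove_symm_apply,
        Fin.insertNthEquiv, Equiv.coe_fn_mk, Fin.prod_univ_succ, Fin.insertNth_zero]
      simp [Fin.zero_succAbove, Fin.cons_zero, Fin.cons_succ]
    rw [heq]
    exact (hf 0).mul_prod (ih _ fun t => hf t.succ)

/-- coordinates of the big space indexed by Fin n × Bool -/
def bc {n : ℕ} (ω : Fin n → ℝ × ℝ) (s : Fin n × Bool) : ℝ := pc (ω s.1) s.2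

set_option maxHeartbeats 1000000 in
lemma integrable_eval_big {n : ℕ} (Q : MvPolynomial (Fin n × Bool) ℝ) :
    Integrable (fun ω : Fin n → ℝ×ℝ => MvPolynomial.eval (bc ω) Q) (μp n) := by
  have key : ∀ ω : Fin n → ℝ×ℝ, MvPolynomial.eval (bc ω) Q
      = ∑ v ∈ Q.support, MvPolynomial.coeff v Q *
          ∏ t, ((ω t).1 ^ v (t, false) * (ω t).2 ^ v (t, true)) := by
    intro ω
    conv_lhs => rw [Q.as_sum]
    rw [map_sum]
    refine Finset.sum_congr rfl fun v _ => ?_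
    rw [MvPolynomial.eval_monomial, Finsupp.prod_pow]
    congr 1
    rw [Fintype.prod_prod_type]
    refine Finset.prod_congr rfl fun t _ => ?_
    simp [bc, pc, Fintype.prod_bool, mul_comm]
  refine (integrable_finset_sum _ fun v _ => ?_).congr (ae_of_all _ fun ω => (key ω).symm)
  refine (integrable_prod_pi (fun t (z : ℝ × ℝ) => z.1 ^ v (t, false) * z.2 ^ v (t, true))
    fun t => ?_).const_mul _
  exact (integrable_pow_gamma (v (t, false))).mul_prod (integrable_pow_gamma (v (t, true)))

lemma integrable_big_of_polyeq {n : ℕ} (Q : MvPolynomial (Fin n × Bool) ℝ)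
    (g : (Fin n → ℝ×ℝ) → ℝ) (h : ∀ ω, MvPolynomial.eval (bc ω) Q = g ω) :
    Integrable g (μp n) :=
  (integrable_eval_big Q).congr (ae_of_all _ h)

/-! ### The functions S, T, U and the master integrand P -/

def Sf {n : ℕ} (ω : Fin n → ℝ×ℝ) : ℝ := ∑ t, (ω t).1 * (ω t).2
def Tf {n : ℕ} (ω : Fin n → ℝ×ℝ) : ℝ := ∑ t, (ω t).1^2
def Uf {n : ℕ} (ω : Fin n → ℝ×ℝ) : ℝ := ∑ t, (ω t).2^2

def P {n : ℕ} (t : Fin n) (i j p q r : ℕ) (ω : Fin n → ℝ×ℝ) : ℝ :=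
  (ω t).1^i * (ω t).2^j * Sf ω^p * Tf ω^q * Uf ω^r

lemma integrable_P {n : ℕ} (t : Fin n) (i j p q r : ℕ) :
    Integrable (P t i j p q r) (μp n) := by
  refine integrable_big_of_polyeq
    ((MvPolynomial.X (t, false))^i * (MvPolynomial.X (t, true))^j *
     (∑ t' : Fin n, MvPolynomial.X (t', false) * MvPolynomial.X (t', true))^p *
     (∑ t' : Fin n, (MvPolynomial.X (t', false))^2)^q *
     (∑ t' : Fin n, (MvPolynomial.X (t', true))^2)^r) _ fun ω => ?_
  simp [P, Sf, Tf, Uf, bc, pc, map_sum]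

lemma Sf_insertNth {n : ℕ} (t : Fin (n+1)) (z : ℝ×ℝ) (w : Fin n → ℝ×ℝ) :
    Sf (Fin.insertNth t z w) = z.1 * z.2 + Sf w := by
  rw [Sf, Fin.sum_univ_succAbove _ t]
  simp [Sf, Fin.insertNth_apply_same, Fin.insertNth_apply_succAbove]

lemma Tf_insertNth {n : ℕ} (t : Fin (n+1)) (z : ℝ×ℝ) (w : Fin n → ℝ×ℝ) :
    Tf (Fin.insertNth t z w) = z.1^2 + Tf w := by
  rw [Tf, Fin.sum_univ_succAbove _ t]
  simp [Tf, Fin.insertNth_apply_same, Fin.insertNth_apply_succAbove]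

lemma Uf_insertNth {n : ℕ} (t : Fin (n+1)) (z : ℝ×ℝ) (w : Fin n → ℝ×ℝ) :
    Uf (Fin.insertNth t z w) = z.2^2 + Uf w := by
  rw [Uf, Fin.sum_univ_succAbove _ t]
  simp [Uf, Fin.insertNth_apply_same, Fin.insertNth_apply_succAbove]

/-! ### Splitting off one coordinate -/

lemma split {n : ℕ} (t : Fin (n+1)) (g : (Fin (n+1) → ℝ×ℝ) → ℝ)
    (hg : Integrable g (μp (n+1))) :
    ∫ ω, g ω ∂μp (n+1) = ∫ w, ∫ z, g (Fin.insertNth t z w) ∂π2 ∂μp n := by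
  have h := (measurePreserving_piFinSuccAbove (fun _ : Fin (n+1) => π2) t).symm
  have hemb := (MeasurableEquiv.piFinSuccAbove (fun _ : Fin (n+1) => ℝ×ℝ) t).symm.measurableEmbedding
  have hint : Integrable (fun z' : (ℝ×ℝ) × (Fin n → ℝ×ℝ) =>
      g ((MeasurableEquiv.piFinSuccAbove (fun _ : Fin (n+1) => ℝ×ℝ) t).symm z')) (π2.prod (μp n)) := by
    exact (h.integrable_comp_emb hemb).2 hg
  rw [← h.integral_comp hemb g, integral_prod_symm _ hint]
  refine integral_congr_ae (ae_of_all _ fun w => ?_)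
  refine integral_congr_ae (ae_of_all _ fun z => ?_)
  congr 1

lemma P_insertNth {n : ℕ} (t : Fin (n+1)) (i j p q r : ℕ) (z : ℝ×ℝ) (w : Fin n → ℝ×ℝ) :
    P t i j p q r (Fin.insertNth t z w)
      = z.1^i * z.2^j * (z.1*z.2 + Sf w)^p * (z.1^2 + Tf w)^q * (z.2^2 + Uf w)^r := by
  simp [P, Sf_insertNth, Tf_insertNth, Uf_insertNth, Fin.insertNth_apply_same]

lemma integrable_sec (i j p q r : ℕ) (s tv u0 : ℝ) :
    Integrable (fun z : ℝ×ℝ =>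
      z.1^i * z.2^j * (z.1*z.2 + s)^p * (z.1^2 + tv)^q * (z.2^2 + u0)^r) π2 := by
  refine integrable_pair_of_polyeq
    ((MvPolynomial.X false)^i * (MvPolynomial.X true)^j *
     (MvPolynomial.X false * MvPolynomial.X true + MvPolynomial.C s)^p *
     ((MvPolynomial.X false)^2 + MvPolynomial.C tv)^q *
     ((MvPolynomial.X true)^2 + MvPolynomial.C u0)^r) _ fun z => by simp [pc]

set_option maxHeartbeats 1000000 in
lemma steinX {n : ℕ} (t : Fin (n+1)) (i j p q r : ℕ) :
    ∫ ω, P t (i+1) j p q r ω ∂μp (n+1)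
      = (i:ℝ) * ∫ ω, P t (i-1) j p q r ω ∂μp (n+1)
      + (p:ℝ) * ∫ ω, P t i (j+1) (p-1) q r ω ∂μp (n+1)
      + 2*(q:ℝ) * ∫ ω, P t (i+1) j p (q-1) r ω ∂μp (n+1) := by
  have hG1 := (integrable_P t (i-1) j p q r).const_mul (i:ℝ)
  have hG2 := (integrable_P t i (j+1) (p-1) q r).const_mul (p:ℝ)
  have hG3 := (integrable_P t (i+1) j p (q-1) r).const_mul (2*(q:ℝ))
  have hG : Integrable (fun ω => (i:ℝ) * P t (i-1) j p q r ω
      + (p:ℝ) * P t i (j+1) (p-1) q r ω + 2*(q:ℝ) * P t (i+1) j p (q-1) r ω) (μp (n+1)) :=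
    (hG1.add hG2).add hG3
  have mid : ∀ w : Fin n → ℝ×ℝ,
      ∫ z, P t (i+1) j p q r (Fin.insertNth t z w) ∂π2
        = ∫ z, ((i:ℝ) * P t (i-1) j p q r (Fin.insertNth t z w)
            + (p:ℝ) * P t i (j+1) (p-1) q r (Fin.insertNth t z w)
            + 2*(q:ℝ) * P t (i+1) j p (q-1) r (Fin.insertNth t z w)) ∂π2 := by
    intro w
    have key : ∀ y : ℝ,
        ∫ x, (x^(i+1) * y^j * (x*y + Sf w)^p * (x^2 + Tf w)^q * (y^2 + Uf w)^r) ∂γ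
          = ∫ x, ((i:ℝ) * (x^(i-1) * y^j * (x*y + Sf w)^p * (x^2 + Tf w)^q * (y^2 + Uf w)^r)
              + (p:ℝ) * (x^i * y^(j+1) * (x*y + Sf w)^(p-1) * (x^2 + Tf w)^q * (y^2 + Uf w)^r)
              + 2*(q:ℝ) * (x^(i+1) * y^j * (x*y + Sf w)^p * (x^2 + Tf w)^(q-1) * (y^2 + Uf w)^r)) ∂γ := by
      intro y
      set s := Sf w
      set tv := Tf w
      set u0 := Uf w
      set u : ℝ → ℝ := fun x => x^i * (x*y+s)^p * (x^2+tv)^q * (y^j * (y^2+u0)^r) with hu_def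
      set u' : ℝ → ℝ := fun x =>
        ((i:ℝ) * x^(i-1) * (x*y+s)^p * (x^2+tv)^q
          + (p:ℝ) * x^i * (x*y+s)^(p-1) * (x^2+tv)^q * y
          + 2*(q:ℝ) * x^(i+1) * (x*y+s)^p * (x^2+tv)^(q-1)) * (y^j * (y^2+u0)^r) with hu'_def
      have hderiv : ∀ x, HasDerivAt u (u' x) x := by
        intro x
        have h1 := hasDerivAt_pow i x
        have h2 := (((hasDerivAt_mul_const y (x := x))).add_const s).pow p
        have h3 := ((hasDerivAt_pow 2 x).add_const tv).pow q
        have h := ((h1.mul h2).mul h3).mul_const (y^j * (y^2+u0)^r)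
        refine HasDerivAt.congr_deriv (f := u) h ?_
        simp only [hu'_def, Pi.mul_apply, Pi.pow_apply]
        ring
      have hxu : Integrable (fun x => x * u x) γ := by
        refine integrable_gamma_of_polyeq
          (Polynomial.X * (Polynomial.X^i * (Polynomial.C y * Polynomial.X + Polynomial.C s)^p *
            (Polynomial.X^2 + Polynomial.C tv)^q * Polynomial.C (y^j * (y^2+u0)^r))) _ fun x => ?_
        simp only [hu_def, Polynomial.eval_mul, Polynomial.eval_pow, Polynomial.eval_add,
          Polynomial.eval_C, Polynomial.eval_X]
        ring
      have hiu : Integrable u γ := by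
        refine integrable_gamma_of_polyeq
          (Polynomial.X^i * (Polynomial.C y * Polynomial.X + Polynomial.C s)^p *
            (Polynomial.X^2 + Polynomial.C tv)^q * Polynomial.C (y^j * (y^2+u0)^r)) _ fun x => ?_
        simp only [hu_def, Polynomial.eval_mul, Polynomial.eval_pow, Polynomial.eval_add,
          Polynomial.eval_C, Polynomial.eval_X]
        ring
      have hiu' : Integrable u' γ := by
        refine integrable_gamma_of_polyeq
          ((Polynomial.C (i:ℝ) * Polynomial.X^(i-1) * (Polynomial.C y * Polynomial.X + Polynomial.C s)^p *
              (Polynomial.X^2 + Polynomial.C tv)^q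
            + Polynomial.C (p:ℝ) * Polynomial.X^i * (Polynomial.C y * Polynomial.X + Polynomial.C s)^(p-1) *
              (Polynomial.X^2 + Polynomial.C tv)^q * Polynomial.C y
            + Polynomial.C (2*(q:ℝ)) * Polynomial.X^(i+1) * (Polynomial.C y * Polynomial.X + Polynomial.C s)^p *
              (Polynomial.X^2 + Polynomial.C tv)^(q-1)) * Polynomial.C (y^j * (y^2+u0)^r)) _ fun x => ?_
        simp only [hu'_def, Polynomial.eval_mul, Polynomial.eval_pow, Polynomial.eval_add,
          Polynomial.eval_C, Polynomial.eval_X]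
        ring
      have hst := stein1 hderiv hxu hiu hiu'
      calc ∫ x, (x^(i+1) * y^j * (x*y + s)^p * (x^2 + tv)^q * (y^2 + u0)^r) ∂γ
          = ∫ x, x * u x ∂γ := by
            refine integral_congr_ae (ae_of_all _ fun x => ?_)
            simp only [hu_def]; ring
        _ = ∫ x, u' x ∂γ := hst
        _ = _ := by
            refine integral_congr_ae (ae_of_all _ fun x => ?_)
            simp only [hu'_def]; ring
    -- now lift key through the product integral
    have hs1 : Integrable (fun z : ℝ×ℝ =>
        z.1^(i+1) * z.2^j * (z.1*z.2 + Sf w)^p * (z.1^2 + Tf w)^q * (z.2^2 + Uf w)^r) π2 :=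
      integrable_sec _ _ _ _ _ _ _ _
    have hs2 : Integrable (fun z : ℝ×ℝ =>
        (i:ℝ) * (z.1^(i-1) * z.2^j * (z.1*z.2 + Sf w)^p * (z.1^2 + Tf w)^q * (z.2^2 + Uf w)^r)
        + (p:ℝ) * (z.1^i * z.2^(j+1) * (z.1*z.2 + Sf w)^(p-1) * (z.1^2 + Tf w)^q * (z.2^2 + Uf w)^r)
        + 2*(q:ℝ) * (z.1^(i+1) * z.2^j * (z.1*z.2 + Sf w)^p * (z.1^2 + Tf w)^(q-1) * (z.2^2 + Uf w)^r)) π2 :=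
      (((integrable_sec _ _ _ _ _ _ _ _).const_mul _).add
        ((integrable_sec _ _ _ _ _ _ _ _).const_mul _)).add
        ((integrable_sec _ _ _ _ _ _ _ _).const_mul _)
    calc ∫ z, P t (i+1) j p q r (Fin.insertNth t z w) ∂π2
        = ∫ z : ℝ×ℝ, (z.1^(i+1) * z.2^j * (z.1*z.2 + Sf w)^p * (z.1^2 + Tf w)^q * (z.2^2 + Uf w)^r) ∂π2 := by
          refine integral_congr_ae (ae_of_all _ fun z => ?_)
          simp only [P_insertNth]
      _ = ∫ y, ∫ x, (x^(i+1) * y^j * (x*y + Sf w)^p * (x^2 + Tf w)^q * (y^2 + Uf w)^r) ∂γ ∂γ :=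
          integral_prod_symm _ hs1
      _ = ∫ y, ∫ x, ((i:ℝ) * (x^(i-1) * y^j * (x*y + Sf w)^p * (x^2 + Tf w)^q * (y^2 + Uf w)^r)
              + (p:ℝ) * (x^i * y^(j+1) * (x*y + Sf w)^(p-1) * (x^2 + Tf w)^q * (y^2 + Uf w)^r)
              + 2*(q:ℝ) * (x^(i+1) * y^j * (x*y + Sf w)^p * (x^2 + Tf w)^(q-1) * (y^2 + Uf w)^r)) ∂γ ∂γ :=
          integral_congr_ae (ae_of_all _ fun y => key y)
      _ = ∫ z : ℝ×ℝ, ((i:ℝ) * (z.1^(i-1) * z.2^j * (z.1*z.2 + Sf w)^p * (z.1^2 + Tf w)^q * (z.2^2 + Uf w)^r)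
              + (p:ℝ) * (z.1^i * z.2^(j+1) * (z.1*z.2 + Sf w)^(p-1) * (z.1^2 + Tf w)^q * (z.2^2 + Uf w)^r)
              + 2*(q:ℝ) * (z.1^(i+1) * z.2^j * (z.1*z.2 + Sf w)^p * (z.1^2 + Tf w)^(q-1) * (z.2^2 + Uf w)^r)) ∂π2 :=
          (integral_prod_symm _ hs2).symm
      _ = _ := by
          refine integral_congr_ae (ae_of_all _ fun z => ?_)
          simp only [P_insertNth]
  calc ∫ ω, P t (i+1) j p q r ω ∂μp (n+1)
      = ∫ w, ∫ z, P t (i+1) j p q r (Fin.insertNth t z w) ∂π2 ∂μp n :=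
        split t _ (integrable_P t (i+1) j p q r)
    _ = ∫ w, ∫ z, ((i:ℝ) * P t (i-1) j p q r (Fin.insertNth t z w)
            + (p:ℝ) * P t i (j+1) (p-1) q r (Fin.insertNth t z w)
            + 2*(q:ℝ) * P t (i+1) j p (q-1) r (Fin.insertNth t z w)) ∂π2 ∂μp n :=
        integral_congr_ae (ae_of_all _ fun w => mid w)
    _ = ∫ ω, ((i:ℝ) * P t (i-1) j p q r ω + (p:ℝ) * P t i (j+1) (p-1) q r ω
            + 2*(q:ℝ) * P t (i+1) j p (q-1) r ω) ∂μp (n+1) := (split t _ hG).symm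
    _ = _ := by
        have h12 : Integrable (fun ω => (i:ℝ) * P t (i-1) j p q r ω
            + (p:ℝ) * P t i (j+1) (p-1) q r ω) (μp (n+1)) := hG1.add hG2
        rw [integral_add h12 hG3, integral_add hG1 hG2,
          integral_const_mul, integral_const_mul, integral_const_mul]


lemma integrable_STU {n : ℕ} (p q r : ℕ) :
    Integrable (fun ω : Fin n → ℝ×ℝ => Sf ω^p * Tf ω^q * Uf ω^r) (μp n) := by
  refine integrable_big_of_polyeq
    ((∑ t' : Fin n, MvPolynomial.X (t', false) * MvPolynomial.X (t', true))^p *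
     (∑ t' : Fin n, (MvPolynomial.X (t', false))^2)^q *
     (∑ t' : Fin n, (MvPolynomial.X (t', true))^2)^r) _ fun ω => ?_
  simp [Sf, Tf, Uf, bc, pc, map_sum]

/-! ### swap symmetry -/

lemma swap_mp {n : ℕ} : MeasurePreserving
    (⇑(MeasurableEquiv.piCongrRight (fun _ : Fin n => (MeasurableEquiv.prodComm : ℝ×ℝ ≃ᵐ ℝ×ℝ))))
    (μp n) (μp n) :=
  measurePreserving_pi _ _ (fun _ => Measure.measurePreserving_swap)

lemma swap_integral {n : ℕ} (g : (Fin n → ℝ×ℝ) → ℝ) :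
    ∫ ω, g (fun t' => ((ω t').2, (ω t').1)) ∂μp n = ∫ ω, g ω ∂μp n :=
  MeasurePreserving.integral_comp' swap_mp g

lemma Sf_swap {n : ℕ} (ω : Fin n → ℝ×ℝ) :
    Sf (fun t' => ((ω t').2, (ω t').1)) = Sf ω := by
  rw [Sf, Sf]; exact Finset.sum_congr rfl fun t _ => mul_comm _ _

lemma STU_swap {n : ℕ} (p q r : ℕ) :
    ∫ ω, Sf ω^p * Tf ω^q * Uf ω^r ∂μp n = ∫ ω, Sf ω^p * Tf ω^r * Uf ω^q ∂μp n := by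
  rw [← swap_integral (fun ω => Sf ω^p * Tf ω^r * Uf ω^q)]
  refine integral_congr_ae (ae_of_all _ fun ω => ?_)
  simp only [Sf_swap, Tf, Uf]
  ring

/-! ### recurrences -/

lemma R1 {n : ℕ} (p q r : ℕ) :
    ∫ ω, Sf ω^p * Tf ω^(q+1) * Uf ω^r ∂μp (n+1)
      = (((n:ℝ)+1) + p + 2*q) * ∫ ω, Sf ω^p * Tf ω^q * Uf ω^r ∂μp (n+1) := by
  have hpt : ∀ ω : Fin (n+1) → ℝ×ℝ,
      Sf ω^p * Tf ω^(q+1) * Uf ω^r = ∑ t, P t 2 0 p q r ω := by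
    intro ω
    simp only [P, pow_zero, mul_one]
    rw [← Finset.sum_mul, ← Finset.sum_mul, ← Finset.sum_mul]
    rw [show (∑ t, (ω t).1^2) = Tf ω from rfl]
    ring
  have h2 : ∀ t : Fin (n+1), ∫ ω, P t 2 0 p q r ω ∂μp (n+1)
      = ((1:ℕ):ℝ) * (∫ ω, P t 0 0 p q r ω ∂μp (n+1))
      + (p:ℝ) * ∫ ω, P t 1 1 (p-1) q r ω ∂μp (n+1)
      + 2*(q:ℝ) * ∫ ω, P t 2 0 p (q-1) r ω ∂μp (n+1) := fun t => steinX t 1 0 p q r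
  -- term A : P t 0 0 p q r = S^p T^q U^r
  have hA : ∀ t : Fin (n+1), ∫ ω, P t 0 0 p q r ω ∂μp (n+1)
      = ∫ ω, Sf ω^p * Tf ω^q * Uf ω^r ∂μp (n+1) := by
    intro t
    refine integral_congr_ae (ae_of_all _ fun ω => ?_)
    simp [P]
  -- term B : ∑ over t equals p * base integral
  have hB : (p:ℝ) * (∑ t : Fin (n+1), ∫ ω, P t 1 1 (p-1) q r ω ∂μp (n+1))
      = (p:ℝ) * ∫ ω, Sf ω^p * Tf ω^q * Uf ω^r ∂μp (n+1) := by
    rcases p with _ | p'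
    · simp
    · congr 1
      simp only [Nat.add_sub_cancel]
      rw [← integral_finset_sum _ (fun t _ => integrable_P t 1 1 p' q r)]
      refine integral_congr_ae (ae_of_all _ fun ω => ?_)
      simp only [P, pow_one, Nat.add_sub_cancel]
      rw [← Finset.sum_mul, ← Finset.sum_mul, ← Finset.sum_mul]
      rw [show (∑ t, (ω t).1 * (ω t).2) = Sf ω from rfl]
      ring
  have hC : (2*(q:ℝ)) * (∑ t : Fin (n+1), ∫ ω, P t 2 0 p (q-1) r ω ∂μp (n+1))
      = (2*(q:ℝ)) * ∫ ω, Sf ω^p * Tf ω^q * Uf ω^r ∂μp (n+1) := by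
    rcases q with _ | q'
    · simp
    · congr 1
      simp only [Nat.add_sub_cancel]
      rw [← integral_finset_sum _ (fun t _ => integrable_P t 2 0 p q' r)]
      refine integral_congr_ae (ae_of_all _ fun ω => ?_)
      simp only [P, pow_zero, mul_one, Nat.add_sub_cancel]
      rw [← Finset.sum_mul, ← Finset.sum_mul, ← Finset.sum_mul]
      rw [show (∑ t, (ω t).1^2) = Tf ω from rfl]
      ring
  calc ∫ ω, Sf ω^p * Tf ω^(q+1) * Uf ω^r ∂μp (n+1)
      = ∫ ω, ∑ t, P t 2 0 p q r ω ∂μp (n+1) := integral_congr_ae (ae_of_all _ hpt)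
    _ = ∑ t : Fin (n+1), ∫ ω, P t 2 0 p q r ω ∂μp (n+1) :=
        integral_finset_sum _ (fun t _ => integrable_P t 2 0 p q r)
    _ = ∑ t : Fin (n+1), (((1:ℕ):ℝ) * (∫ ω, P t 0 0 p q r ω ∂μp (n+1))
          + (p:ℝ) * ∫ ω, P t 1 1 (p-1) q r ω ∂μp (n+1)
          + 2*(q:ℝ) * ∫ ω, P t 2 0 p (q-1) r ω ∂μp (n+1)) :=
        Finset.sum_congr rfl fun t _ => h2 t
    _ = (((n:ℝ)+1) + p + 2*q) * ∫ ω, Sf ω^p * Tf ω^q * Uf ω^r ∂μp (n+1) := by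
        rw [Finset.sum_add_distrib, Finset.sum_add_distrib, ← Finset.mul_sum, ← Finset.mul_sum,
          ← Finset.mul_sum]
        rw [Finset.sum_congr rfl (fun t _ => hA t)]
        rw [Finset.sum_const, Finset.card_univ, Fintype.card_fin]
        rw [hB, hC]
        push_cast
        ring

lemma R2 {n : ℕ} (p q r : ℕ) :
    ∫ ω, Sf ω^p * Tf ω^q * Uf ω^(r+1) ∂μp (n+1)
      = (((n:ℝ)+1) + p + 2*r) * ∫ ω, Sf ω^p * Tf ω^q * Uf ω^r ∂μp (n+1) := by
  rw [STU_swap p q (r+1), R1 p r q, STU_swap p r q]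

lemma R3 {n : ℕ} (p : ℕ) :
    ∫ ω, Sf ω^(p+2) * Tf ω^0 * Uf ω^0 ∂μp (n+1)
      = ((p:ℝ)+1) * ∫ ω, Sf ω^p * Tf ω^0 * Uf ω^1 ∂μp (n+1) := by
  have hpt : ∀ ω : Fin (n+1) → ℝ×ℝ,
      Sf ω^(p+2) * Tf ω^0 * Uf ω^0 = ∑ t, P t 1 1 (p+1) 0 0 ω := by
    intro ω
    simp only [P, pow_zero, pow_one, mul_one]
    rw [← Finset.sum_mul]
    rw [show (∑ t, (ω t).1 * (ω t).2) = Sf ω from rfl]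
    ring
  have h2 : ∀ t : Fin (n+1), ∫ ω, P t 1 1 (p+1) 0 0 ω ∂μp (n+1)
      = ((p:ℝ)+1) * ∫ ω, P t 0 2 p 0 0 ω ∂μp (n+1) := by
    intro t
    have := steinX t 0 1 (p+1) 0 0
    simp only [Nat.cast_zero, zero_mul, Nat.cast_ofNat, Nat.add_sub_cancel, mul_zero,
      zero_add, add_zero, Nat.cast_add, Nat.cast_one] at this
    convert this using 3 <;> push_cast <;> ring_nf
  have hfin : ((p:ℝ)+1) * (∑ t : Fin (n+1), ∫ ω, P t 0 2 p 0 0 ω ∂μp (n+1))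
      = ((p:ℝ)+1) * ∫ ω, Sf ω^p * Tf ω^0 * Uf ω^1 ∂μp (n+1) := by
    congr 1
    rw [← integral_finset_sum _ (fun t _ => integrable_P t 0 2 p 0 0)]
    refine integral_congr_ae (ae_of_all _ fun ω => ?_)
    simp only [P, pow_zero, pow_one, one_mul, mul_one]
    rw [← Finset.sum_mul]
    rw [show (∑ t, (ω t).2^2) = Uf ω from rfl]
    ring
  calc ∫ ω, Sf ω^(p+2) * Tf ω^0 * Uf ω^0 ∂μp (n+1)
      = ∫ ω, ∑ t, P t 1 1 (p+1) 0 0 ω ∂μp (n+1) := integral_congr_ae (ae_of_all _ hpt)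
    _ = ∑ t : Fin (n+1), ∫ ω, P t 1 1 (p+1) 0 0 ω ∂μp (n+1) :=
        integral_finset_sum _ (fun t _ => integrable_P t 1 1 (p+1) 0 0)
    _ = ∑ t : Fin (n+1), ((p:ℝ)+1) * ∫ ω, P t 0 2 p 0 0 ω ∂μp (n+1) :=
        Finset.sum_congr rfl fun t _ => h2 t
    _ = ((p:ℝ)+1) * ∫ ω, Sf ω^p * Tf ω^0 * Uf ω^1 ∂μp (n+1) := by
        rw [← Finset.mul_sum, hfin]


lemma I_base {n : ℕ} : ∫ ω, Sf ω^0 * Tf ω^0 * Uf ω^0 ∂μp n = 1 := by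
  simp

lemma chainT {n : ℕ} (p r : ℕ) : ∀ q : ℕ,
    ∫ ω, Sf ω^p * Tf ω^q * Uf ω^r ∂μp (n+1)
      = (∏ k ∈ range q, (((n:ℝ)+1) + p + 2*k)) * ∫ ω, Sf ω^p * Tf ω^0 * Uf ω^r ∂μp (n+1) := by
  intro q
  induction q with
  | zero => simp
  | succ q ih =>
    rw [R1, ih, prod_range_succ]
    ring

lemma chainU {n : ℕ} (p : ℕ) : ∀ r : ℕ,
    ∫ ω, Sf ω^p * Tf ω^0 * Uf ω^r ∂μp (n+1)
      = (∏ k ∈ range r, (((n:ℝ)+1) + p + 2*k)) * ∫ ω, Sf ω^p * Tf ω^0 * Uf ω^0 ∂μp (n+1) := by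
  intro r
  induction r with
  | zero => simp
  | succ r ih =>
    rw [R2, ih, prod_range_succ]
    ring

lemma Mclosed {n : ℕ} : ∀ a : ℕ,
    ∫ ω, Sf ω^(2*a) * Tf ω^0 * Uf ω^0 ∂μp (n+1)
      = ∏ k ∈ range a, ((2*(k:ℝ)+1) * (((n:ℝ)+1) + 2*k)) := by
  intro a
  induction a with
  | zero => simpa using I_base
  | succ a ih =>
    have h1 : 2*(a+1) = 2*a+2 := by ring
    rw [h1, R3 (2*a), R2 (2*a) 0 0, ih, prod_range_succ]
    push_cast
    ring

lemma prod_Icc_shift (c0 : ℝ) (m : ℕ) :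
    ∏ i ∈ Finset.Icc 1 m, (c0 + 2*((m:ℝ) - i)) = ∏ k ∈ range m, (c0 + 2*k) := by
  refine Finset.prod_nbij' (fun i => m - i) (fun k => m - k) ?_ ?_ ?_ ?_ ?_
  · intro i hi; simp only [Finset.mem_Icc] at hi; simp only [Finset.mem_range]; omega
  · intro k hk; simp only [Finset.mem_range] at hk; simp only [Finset.mem_Icc]; omega
  · intro i hi; simp only [Finset.mem_Icc] at hi; show m - (m - i) = i; omega
  · intro k hk; simp only [Finset.mem_range] at hk; show m - (m - k) = k; omega
  · intro i hi; simp only [Finset.mem_Icc] at hi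
    have : ((m - i : ℕ) : ℝ) = (m : ℝ) - i := by
      push_cast [Nat.cast_sub hi.2]; ring
    rw [this]

lemma df (a : ℕ) : ((2*a - 1).doubleFactorial : ℝ) = ∏ k ∈ range a, (2*(k:ℝ)+1) := by
  induction a with
  | zero => simp [Nat.doubleFactorial]
  | succ a ih =>
    rw [prod_range_succ, ← ih]
    have h1 : 2*(a+1)-1 = 2*a+1 := by omega
    rw [h1]
    have h2 : Nat.doubleFactorial (2*a+1) = (2*a+1) * Nat.doubleFactorial (2*a-1) := by
      rcases a with _ | a'
      · rfl
      · have h3 : 2*(a'+1)+1 = (2*a'+1)+2 := by omega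
        have h4 : 2*(a'+1)-1 = 2*a'+1 := by omega
        rw [h3, h4, Nat.doubleFactorial_add_two]
    rw [h2]
    push_cast
    ring

end Stmt3Aux

open Stmt3Aux in
theorem stmt_3 (ν : ℕ) (hν : 1 ≤ ν) (a b c : ℕ) :
    ∫ ω : Fin ν → ℝ × ℝ,
        (∑ t, (ω t).1 * (ω t).2) ^ (2 * a) *
          (∑ t, (ω t).1 ^ 2) ^ b * (∑ t, (ω t).2 ^ 2) ^ c
      ∂(Measure.pi fun _ : Fin ν => (gaussianReal 0 1).prod (gaussianReal 0 1)) =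
    (Nat.doubleFactorial (2 * a - 1) : ℝ) *
      (∏ i ∈ Finset.Icc 1 a, ((ν : ℝ) + 2 * ((a : ℝ) - (i : ℝ)))) *
      (∏ i ∈ Finset.Icc 1 b, ((ν : ℝ) + 2 * ((a : ℝ) + (b : ℝ) - (i : ℝ)))) *
      (∏ i ∈ Finset.Icc 1 c, ((ν : ℝ) + 2 * ((a : ℝ) + (c : ℝ) - (i : ℝ)))) := by
  obtain ⟨n, rfl⟩ : ∃ n, ν = n + 1 := ⟨ν - 1, by omega⟩
  have hLHS : ∫ ω : Fin (n+1) → ℝ × ℝ,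
        (∑ t, (ω t).1 * (ω t).2) ^ (2 * a) *
          (∑ t, (ω t).1 ^ 2) ^ b * (∑ t, (ω t).2 ^ 2) ^ c
      ∂(Measure.pi fun _ : Fin (n+1) => (gaussianReal 0 1).prod (gaussianReal 0 1))
      = ∫ ω, Sf ω^(2*a) * Tf ω^b * Uf ω^c ∂μp (n+1) := rfl
  rw [hLHS, chainT (2*a) c b, chainU (2*a) c, Mclosed a]
  -- rewrite the RHS products
  have e1 : ∏ i ∈ Finset.Icc 1 a, (((n:ℝ)+1) + 2 * ((a : ℝ) - (i : ℝ)))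
      = ∏ k ∈ range a, (((n:ℝ)+1) + 2*k) := prod_Icc_shift _ a
  have e2 : ∏ i ∈ Finset.Icc 1 b, (((n:ℝ)+1) + 2 * ((a : ℝ) + (b : ℝ) - (i : ℝ)))
      = ∏ k ∈ range b, (((n:ℝ)+1) + 2*(a:ℝ) + 2*k) := by
    rw [show (∏ i ∈ Finset.Icc 1 b, (((n:ℝ)+1) + 2 * ((a : ℝ) + (b : ℝ) - (i : ℝ))))
        = ∏ i ∈ Finset.Icc 1 b, ((((n:ℝ)+1) + 2*(a:ℝ)) + 2 * ((b : ℝ) - (i : ℝ))) from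
      Finset.prod_congr rfl fun i _ => by ring]
    rw [prod_Icc_shift (((n:ℝ)+1) + 2*(a:ℝ)) b]
  have e3 : ∏ i ∈ Finset.Icc 1 c, (((n:ℝ)+1) + 2 * ((a : ℝ) + (c : ℝ) - (i : ℝ)))
      = ∏ k ∈ range c, (((n:ℝ)+1) + 2*(a:ℝ) + 2*k) := by
    rw [show (∏ i ∈ Finset.Icc 1 c, (((n:ℝ)+1) + 2 * ((a : ℝ) + (c : ℝ) - (i : ℝ))))
        = ∏ i ∈ Finset.Icc 1 c, ((((n:ℝ)+1) + 2*(a:ℝ)) + 2 * ((c : ℝ) - (i : ℝ))) from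
      Finset.prod_congr rfl fun i _ => by ring]
    rw [prod_Icc_shift (((n:ℝ)+1) + 2*(a:ℝ)) c]
  push_cast at e1 e2 e3 ⊢
  rw [e1, e2, e3, df a]
  rw [Finset.prod_mul_distrib]
  have hb : ∏ k ∈ range b, ((n:ℝ) + 1 + (2*a) + 2*k) = ∏ k ∈ range b, ((n:ℝ) + 1 + 2*(a:ℝ) + 2*k) :=
    Finset.prod_congr rfl fun k _ => by ring
  have hc : ∏ k ∈ range c, ((n:ℝ) + 1 + (2*a) + 2*k) = ∏ k ∈ range c, ((n:ℝ) + 1 + 2*(a:ℝ) + 2*k) :=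
    Finset.prod_congr rfl fun k _ => by ring
  push_cast at hb hc
  rw [hb, hc]
  ring
end
end

section
/- Let ν ≥ 1 be a natural number, let μ : Fin ν → ℝ, and set δ = Σ_{t=1}^{ν} μ_t². Then for every natural number n, the n-th moment of w = Σ_{t=1}^{ν} x_t², where x_t are independent Gaussian random variables with mean μ_t and variance 1, satisfies E[w^n] = Σ_{m=0}^{n} C(n,m) · ∏_{i=1}^{m} (ν + 2(n−i)) · δ^{n−m}; that is, the integral of (Σ_t x_t²)^n over (Fin ν) → ℝ with respect to the product measure Π_t gaussianReal (μ t) 1 equals the stated sum. -/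
open MeasureTheory ProbabilityTheory Finset Real
open scoped NNReal ENNReal
noncomputable def F (x δ : ℝ) (n : ℕ) : ℝ :=
  ∑ j ∈ Finset.range (n + 1), (n.choose j : ℝ) * (δ ^ j * ∏ l ∈ Finset.Ico j n, (x + 2 * l))

lemma F_zero (x δ : ℝ) : F x δ 0 = 1 := by simp [F]

lemma F_rec (x δ : ℝ) (n : ℕ) :
    F x δ (n + 1) = (x + 2 * n) * F x δ n + δ * F (x + 2) δ n := by
  have key : ∀ a : ℕ → ℝ, ∑ j ∈ range (n + 2), ((n+1).choose j : ℝ) * a j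
      = ∑ j ∈ range (n + 1), (n.choose j : ℝ) * a j
        + ∑ j ∈ range (n + 1), (n.choose j : ℝ) * a (j + 1) := by
    intro a
    rw [Finset.sum_range_succ' (fun j => ((n+1).choose j : ℝ) * a j) (n+1)]
    have h1 : ∀ k, ((n+1).choose (k+1) : ℝ) = (n.choose k : ℝ) + (n.choose (k+1) : ℝ) := by
      intro k; rw [Nat.choose_succ_succ]; push_cast; ring
    simp_rw [h1, add_mul, Finset.sum_add_distrib]
    have h2 : ∑ k ∈ range (n + 1), (n.choose (k+1) : ℝ) * a (k+1) + ((n+1).choose 0 : ℝ) * a 0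
        = ∑ j ∈ range (n + 1), (n.choose j : ℝ) * a j := by
      rw [show ((n+1).choose 0 : ℝ) = (n.choose 0 : ℝ) by norm_num]
      rw [← Finset.sum_range_succ' (fun j => (n.choose j : ℝ) * a j) (n+1)]
      rw [Finset.sum_range_succ]
      simp
    linarith [h2]
  unfold F
  rw [show n + 1 + 1 = n + 2 from rfl]
  rw [key (fun j => δ ^ j * ∏ l ∈ Finset.Ico j (n+1), (x + 2 * l))]
  have e1 : ∀ j ∈ range (n+1), (n.choose j : ℝ) * (δ ^ j * ∏ l ∈ Finset.Ico j (n+1), (x + 2*l))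
      = (x + 2*n) * ((n.choose j : ℝ) * (δ ^ j * ∏ l ∈ Finset.Ico j n, (x + 2*l))) := by
    intro j hj
    rw [Finset.prod_Ico_succ_top (Nat.lt_succ_iff.mp (Finset.mem_range.mp hj))]
    ring
  have e2 : ∀ j ∈ range (n+1), (n.choose j : ℝ) * (δ ^ (j+1) * ∏ l ∈ Finset.Ico (j+1) (n+1), (x + 2*l))
      = δ * ((n.choose j : ℝ) * (δ ^ j * ∏ l ∈ Finset.Ico j n, (x + 2 + 2*l))) := by
    intro j hj
    have h : ∏ l ∈ Finset.Ico (j+1) (n+1), (x + 2*(l:ℝ)) = ∏ l ∈ Finset.Ico j n, (x + 2 + 2*(l:ℝ)) := by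
      rw [Finset.prod_Ico_eq_prod_range, Finset.prod_Ico_eq_prod_range]
      rw [Nat.succ_sub_succ]
      refine Finset.prod_congr rfl fun k _ => ?_
      push_cast; ring
    rw [h]; ring
  rw [Finset.sum_congr rfl e1, Finset.sum_congr rfl e2, ← Finset.mul_sum, ← Finset.mul_sum]

lemma F_conv (n : ℕ) : ∀ (x y a b : ℝ),
    ∑ k ∈ range (n + 1), (n.choose k : ℝ) * F x b k * F y a (n - k) = F (x + y) (a + b) n := by
  induction n with
  | zero => intro x y a b; simp [F_zero]
  | succ n ih =>
    intro x y a b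
    rw [Finset.sum_range_succ' (fun k => ((n+1).choose k : ℝ) * F x b k * F y a (n + 1 - k)) (n+1)]
    have h1 : ∀ k, ((n+1).choose (k+1) : ℝ) = (n.choose k : ℝ) + (n.choose (k+1) : ℝ) := by
      intro k; rw [Nat.choose_succ_succ]; push_cast; ring
    have step1 : ∑ k ∈ range (n+1), ((n+1).choose (k+1) : ℝ) * F x b (k+1) * F y a (n + 1 - (k+1))
        = ∑ k ∈ range (n+1), (n.choose k : ℝ) * F x b (k+1) * F y a (n - k)
          + ∑ k ∈ range (n+1), (n.choose (k+1) : ℝ) * F x b (k+1) * F y a (n - k) := by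
      rw [← Finset.sum_add_distrib]
      refine Finset.sum_congr rfl fun k hk => ?_
      rw [h1]; rw [show n + 1 - (k+1) = n - k by omega]; ring
    rw [step1, add_assoc]
    have step2 : ∑ k ∈ range (n+1), (n.choose (k+1) : ℝ) * F x b (k+1) * F y a (n - k)
          + ((n+1).choose 0 : ℝ) * F x b 0 * F y a (n + 1 - 0)
        = ∑ k ∈ range (n+1), (n.choose k : ℝ) * F x b k * F y a (n + 1 - k) := by
      have h3 : ∑ k ∈ range (n+2), (n.choose k : ℝ) * F x b k * F y a (n + 1 - k)
          = ∑ k ∈ range (n+1), (n.choose k : ℝ) * F x b k * F y a (n + 1 - k) := by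
        rw [Finset.sum_range_succ]; simp
      rw [← h3, Finset.sum_range_succ' (fun k => (n.choose k : ℝ) * F x b k * F y a (n + 1 - k)) (n+1)]
      congr 1
      · refine Finset.sum_congr rfl fun k hk => ?_
        rw [show n + 1 - (k+1) = n - k by omega]
      · simp
    rw [step2]
    have e1 : ∀ k ∈ range (n+1), (n.choose k : ℝ) * F x b (k+1) * F y a (n - k)
        = (x + 2*(k:ℝ)) * ((n.choose k : ℝ) * F x b k * F y a (n - k))
          + b * ((n.choose k : ℝ) * F (x+2) b k * F y a (n - k)) := by
      intro k hk; rw [F_rec]; ring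
    have e2 : ∀ k ∈ range (n+1), (n.choose k : ℝ) * F x b k * F y a (n + 1 - k)
        = (y + 2*((n:ℝ) - k)) * ((n.choose k : ℝ) * F x b k * F y a (n - k))
          + a * ((n.choose k : ℝ) * F x b k * F (y+2) a (n - k)) := by
      intro k hk
      have hkn : k ≤ n := Nat.lt_succ_iff.mp (Finset.mem_range.mp hk)
      rw [show n + 1 - k = (n - k) + 1 by omega, F_rec]
      rw [show ((n - k : ℕ) : ℝ) = (n : ℝ) - k from by rw [Nat.cast_sub hkn]]
      ring
    rw [Finset.sum_congr rfl e1, Finset.sum_congr rfl e2,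
      Finset.sum_add_distrib, Finset.sum_add_distrib]
    set T := fun k => (n.choose k : ℝ) * F x b k * F y a (n - k) with hT
    have h1' : (∑ k ∈ range (n+1), (x + 2*(k:ℝ)) * T k)
        + ∑ k ∈ range (n+1), (y + 2*((n:ℝ) - k)) * T k
        = (x + y + 2*(n:ℝ)) * F (x+y) (a+b) n := by
      rw [← Finset.sum_add_distrib, ← ih x y a b, Finset.mul_sum]
      exact Finset.sum_congr rfl fun k _ => by ring
    have h2' : ∑ k ∈ range (n+1), b * ((n.choose k : ℝ) * F (x+2) b k * F y a (n - k))
        = b * F (x+y+2) (a+b) n := by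
      rw [← Finset.mul_sum, ih (x+2) y a b, show x+2+y = x+y+2 from by ring]
    have h3' : ∑ k ∈ range (n+1), a * ((n.choose k : ℝ) * F x b k * F (y+2) a (n - k))
        = a * F (x+y+2) (a+b) n := by
      rw [← Finset.mul_sum, ih x (y+2) a b, show x+(y+2) = x+y+2 from by ring]
    have hF : F (x+y) (a+b) (n+1)
        = (x+y+2*(n:ℝ)) * F (x+y) (a+b) n + (a+b) * F (x+y+2) (a+b) n := by
      rw [F_rec]
    rw [hF]
    linarith [h1', h2', h3']
lemma pdf01 (x : ℝ) : gaussianPDFReal 0 1 x = (√(2*π))⁻¹ * rexp (-x^2/2) := by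
  rw [gaussianPDFReal_def]
  norm_num

lemma gauss01_integral (g : ℝ → ℝ) :
    ∫ x, g x ∂(gaussianReal 0 1) = ∫ x, gaussianPDFReal 0 1 x * g x := by
  rw [gaussianReal_of_var_ne_zero 0 one_ne_zero, gaussianPDF_def]
  have h : (fun x => ENNReal.ofReal (gaussianPDFReal 0 1 x))
      = fun x => ((Real.toNNReal (gaussianPDFReal 0 1 x) : ℝ≥0) : ℝ≥0∞) := rfl
  rw [h, integral_withDensity_eq_integral_smul (measurable_gaussianPDFReal 0 1).real_toNNReal g]
  refine integral_congr_ae (Filter.Eventually.of_forall fun x => ?_)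
  simp [NNReal.smul_def, Real.coe_toNNReal _ (gaussianPDFReal_nonneg 0 1 x)]

lemma gauss01_integrable_iff (g : ℝ → ℝ) :
    Integrable g (gaussianReal 0 1) ↔ Integrable (fun x => gaussianPDFReal 0 1 x * g x) := by
  rw [gaussianReal_of_var_ne_zero 0 one_ne_zero, gaussianPDF_def]
  have h : (fun x => ENNReal.ofReal (gaussianPDFReal 0 1 x))
      = fun x => ((Real.toNNReal (gaussianPDFReal 0 1 x) : ℝ≥0) : ℝ≥0∞) := rfl
  rw [h, integrable_withDensity_iff_integrable_smul (measurable_gaussianPDFReal 0 1).real_toNNReal]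
  refine integrable_congr (Filter.Eventually.of_forall fun x => ?_)
  simp [NNReal.smul_def, Real.coe_toNNReal _ (gaussianPDFReal_nonneg 0 1 x)]

lemma integrable_pow_exp (p : ℕ) : Integrable (fun x : ℝ => x ^ p * rexp (-x^2/2)) := by
  have h := integrable_rpow_mul_exp_neg_mul_sq (b := 1/2) (by norm_num) (s := (p:ℝ))
    (lt_of_lt_of_le neg_one_lt_zero (Nat.cast_nonneg p))
  have e : (fun x : ℝ => x ^ (p:ℝ) * rexp (-(1/2) * x^2)) = fun x : ℝ => x ^ p * rexp (-x^2/2) := by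
    funext x
    rw [Real.rpow_natCast]
    ring_nf
  rwa [e] at h

lemma integrable_pow_gauss01 (p : ℕ) : Integrable (fun x : ℝ => x ^ p) (gaussianReal 0 1) := by
  rw [gauss01_integrable_iff]
  have h : (fun x => gaussianPDFReal 0 1 x * x ^ p)
      = fun x => (√(2*π))⁻¹ * (x ^ p * rexp (-x^2/2)) := by
    funext x; rw [pdf01]; ring
  rw [h]
  exact (integrable_pow_exp p).const_mul _

lemma integrable_pow_gauss (c : ℝ) (p : ℕ) :
    Integrable (fun x : ℝ => x ^ p) (gaussianReal c 1) := by
  have hmap : gaussianReal c 1 = Measure.map (fun x => x + c) (gaussianReal 0 1) := by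
    rw [gaussianReal_map_add_const c, zero_add]
  have hco : (fun x : ℝ => x + c) = ⇑(MeasurableEquiv.addRight c) := rfl
  rw [hmap, hco, (MeasurableEquiv.addRight c).measurableEmbedding.integrable_map_iff]
  have e : ((fun x : ℝ => x ^ p) ∘ ⇑(MeasurableEquiv.addRight c))
      = fun x : ℝ => ∑ r ∈ range (p + 1), x ^ r * (c ^ (p - r) * (p.choose r : ℝ)) := by
    funext x
    show (x + c) ^ p = _
    rw [add_pow]; exact Finset.sum_congr rfl fun r _ => by ring
  rw [e]
  exact integrable_finset_sum _ fun r _ => (integrable_pow_gauss01 r).mul_const _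
lemma even_int (j : ℕ) : ∫ x : ℝ, x^(2*j) * rexp (-x^2/2)
    = 2 * ∫ x in Set.Ioi (0:ℝ), x^(2*j) * rexp (-x^2/2) := by
  have h := integral_add_compl (measurableSet_Ioi (a := (0:ℝ)))
    (integrable_pow_exp (2*j))
  rw [Set.compl_Ioi] at h
  have h0 := integral_comp_neg_Ioi (0:ℝ) (fun x => x^(2*j) * rexp (-x^2/2))
  rw [neg_zero] at h0
  have h2 : ∫ x in Set.Iic (0:ℝ), x^(2*j) * rexp (-x^2/2)
      = ∫ x in Set.Ioi (0:ℝ), x^(2*j) * rexp (-x^2/2) := by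
    rw [← h0]
    refine setIntegral_congr_fun measurableSet_Ioi fun x _ => ?_
    rw [Even.neg_pow ⟨j, two_mul j⟩, neg_sq]
  linarith [h, h2]

lemma J_repr (m : ℕ) : ∫ x in Set.Ioi (0:ℝ), x^(2*m) * rexp (-x^2/2)
    = ((1:ℝ)/2) ^ (-((2*(m:ℝ))+1)/2) * (1/2) * Gamma (((2*(m:ℝ))+1)/2) := by
  rw [← integral_rpow_mul_exp_neg_mul_rpow (p := 2) (q := (2*m:ℝ)) (b := 1/2) two_pos
    (lt_of_lt_of_le neg_one_lt_zero (by positivity)) (by norm_num)]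
  refine setIntegral_congr_fun measurableSet_Ioi fun x hx => ?_
  rw [show (2*(m:ℝ)) = ((2*m : ℕ) : ℝ) by push_cast; ring, Real.rpow_natCast]
  congr 1
  rw [show (2:ℝ) = ((2:ℕ):ℝ) by norm_num, Real.rpow_natCast]
  ring_nf

lemma J_rec (j : ℕ) : ∫ x in Set.Ioi (0:ℝ), x^(2*(j+1)) * rexp (-x^2/2)
    = (2*(j:ℝ)+1) * ∫ x in Set.Ioi (0:ℝ), x^(2*j) * rexp (-x^2/2) := by
  rw [J_repr, J_repr]
  push_cast
  rw [show ((2*((j:ℝ)+1))+1)/2 = ((2*(j:ℝ))+1)/2 + 1 by ring,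
    Gamma_add_one (by positivity),
    show -(2*((j:ℝ)+1)+1)/2 = -(2*(j:ℝ)+1)/2 - 1 by ring,
    Real.rpow_sub (by norm_num : (0:ℝ) < 1/2), Real.rpow_one]
  field_simp

noncomputable def R (m : ℕ) : ℝ := ((2*m).factorial : ℝ) / (2^m * (m.factorial : ℝ))

lemma R_succ (m : ℕ) : R (m+1) = (2*(m:ℝ)+1) * R m := by
  unfold R
  rw [show 2*(m+1) = (2*m+1)+1 by ring, Nat.factorial_succ (2*m+1), Nat.factorial_succ (2*m),
    Nat.factorial_succ m]
  have h1 : ((2*m).factorial : ℝ) ≠ 0 := Nat.cast_ne_zero.mpr (Nat.factorial_ne_zero _)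
  have h2 : ((m).factorial : ℝ) ≠ 0 := Nat.cast_ne_zero.mpr (Nat.factorial_ne_zero _)
  push_cast
  field_simp
  ring

lemma R_pos (m : ℕ) : 0 < R m := by
  unfold R
  positivity
lemma gauss01_pow_repr (m : ℕ) : ∫ x, x^(2*m) ∂(gaussianReal 0 1)
    = (√(2*π))⁻¹ * (2 * ∫ x in Set.Ioi (0:ℝ), x^(2*m) * rexp (-x^2/2)) := by
  rw [gauss01_integral fun x => x^(2*m), ← even_int]
  rw [show (fun x : ℝ => gaussianPDFReal 0 1 x * x ^ (2*m))
    = fun x : ℝ => (√(2*π))⁻¹ * (x^(2*m) * rexp (-x^2/2)) from funext fun x => by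
      rw [pdf01]; ring]
  rw [MeasureTheory.integral_const_mul]

lemma gauss01_even (m : ℕ) : ∫ x, x^(2*m) ∂(gaussianReal 0 1) = R m := by
  induction m with
  | zero =>
    simp only [Nat.mul_zero, pow_zero]
    rw [MeasureTheory.integral_const]
    simp [R]
  | succ m ih =>
    rw [gauss01_pow_repr, J_rec, R_succ, ← ih, gauss01_pow_repr]
    ring

lemma gauss01_odd (m : ℕ) : ∫ x, x^(2*m+1) ∂(gaussianReal 0 1) = 0 := by
  have hmap : Measure.map (fun x => (-1:ℝ) * x) (gaussianReal 0 1) = gaussianReal 0 1 := by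
    rw [gaussianReal_map_const_mul (-1:ℝ)]
    norm_num
  have h : ∫ x, x^(2*m+1) ∂(gaussianReal 0 1)
      = ∫ x, ((-1:ℝ)*x)^(2*m+1) ∂(gaussianReal 0 1) := by
    nth_rewrite 1 [← hmap]
    rw [integral_map (by fun_prop) (by fun_prop)]
  have h2 : ∫ x, ((-1:ℝ)*x)^(2*m+1) ∂(gaussianReal 0 1)
      = - ∫ x, x^(2*m+1) ∂(gaussianReal 0 1) := by
    rw [← integral_neg]
    refine integral_congr_ae (Filter.Eventually.of_forall fun x => ?_)
    show ((-1:ℝ)*x)^(2*m+1) = -(x^(2*m+1))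
    rw [mul_pow, Odd.neg_one_pow ⟨m, by ring⟩]
    ring
  linarith [h, h2]
lemma prod_odd (a t : ℕ) : ∏ l ∈ Ico a (a+t), (2*(l:ℝ)+1) = R (a+t) / R a := by
  induction t with
  | zero => simp [div_self (ne_of_gt (R_pos a))]
  | succ t ih =>
    rw [show a + (t+1) = (a+t) + 1 from rfl, Finset.prod_Ico_succ_top (Nat.le_add_right a t), ih,
      R_succ (a+t)]
    push_cast
    field_simp

lemma coeff_id {m k : ℕ} (hmk : m ≤ k) :
    ((2*k).choose (2*m) : ℝ) * R m = (k.choose m : ℝ) * (R k / R (k-m)) := by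
  rw [Nat.cast_choose ℝ (by omega : 2*m ≤ 2*k), Nat.cast_choose ℝ hmk]
  unfold R
  rw [show 2*k - 2*m = 2*(k-m) by omega]
  have h2 : (2:ℝ)^k = 2^m * 2^(k-m) := by
    rw [← pow_add]; congr 1; omega
  rw [h2]
  have f1 : ((2*k).factorial : ℝ) ≠ 0 := Nat.cast_ne_zero.mpr (Nat.factorial_ne_zero _)
  have f2 : ((2*m).factorial : ℝ) ≠ 0 := Nat.cast_ne_zero.mpr (Nat.factorial_ne_zero _)
  have f3 : ((2*(k-m)).factorial : ℝ) ≠ 0 := Nat.cast_ne_zero.mpr (Nat.factorial_ne_zero _)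
  have f4 : (k.factorial : ℝ) ≠ 0 := Nat.cast_ne_zero.mpr (Nat.factorial_ne_zero _)
  have f5 : (m.factorial : ℝ) ≠ 0 := Nat.cast_ne_zero.mpr (Nat.factorial_ne_zero _)
  have f6 : ((k-m).factorial : ℝ) ≠ 0 := Nat.cast_ne_zero.mpr (Nat.factorial_ne_zero _)
  field_simp
lemma sum_even (h : ℕ → ℝ) (hodd : ∀ j, h (2*j+1) = 0) (k : ℕ) :
    ∑ r ∈ range (2*k+1), h r = ∑ j ∈ range (k+1), h (2*j) := by
  induction k with
  | zero => simp
  | succ k ih =>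
    rw [show 2*(k+1)+1 = (2*k+1) + 1 + 1 by ring, Finset.sum_range_succ, Finset.sum_range_succ,
      ih, hodd k]
    rw [Finset.sum_range_succ (fun x => h (2*x)) (k+1), Finset.sum_range_succ (fun x => h (2*x)) k]
    rw [show 2*(k+1) = 2*k+2 by ring]
    ring

lemma gauss_moment (c : ℝ) (k : ℕ) :
    ∫ x, x^(2*k) ∂(gaussianReal c 1) = F 1 (c^2) k := by
  have hmap : gaussianReal c 1 = Measure.map (fun x => x + c) (gaussianReal 0 1) := by
    rw [gaussianReal_map_add_const c, zero_add]
  have hco : (fun x : ℝ => x + c) = ⇑(MeasurableEquiv.addRight c) := rfl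
  rw [hmap, hco, integral_map_equiv]
  have e : (fun x : ℝ => ((MeasurableEquiv.addRight c) x)^(2*k))
      = fun x : ℝ => ∑ r ∈ range (2*k+1), x ^ r * (c ^ (2*k - r) * ((2*k).choose r : ℝ)) := by
    funext x
    show (x + c)^(2*k) = _
    rw [add_pow]
    exact Finset.sum_congr rfl fun r _ => by ring
  rw [e, integral_finset_sum _ fun r _ => (integrable_pow_gauss01 r).mul_const _]
  have e2 : ∀ r ∈ range (2*k+1),
      (∫ x, x ^ r * (c ^ (2*k - r) * ((2*k).choose r : ℝ)) ∂(gaussianReal 0 1))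
      = (∫ x, x ^ r ∂(gaussianReal 0 1)) * (c ^ (2*k - r) * ((2*k).choose r : ℝ)) := by
    intro r _
    exact MeasureTheory.integral_mul_const _ _
  rw [Finset.sum_congr rfl e2]
  set g : ℕ → ℝ := fun r => (∫ x, x ^ r ∂(gaussianReal 0 1)) * (c ^ (2*k - r) * ((2*k).choose r : ℝ))
    with hg
  have hodd : ∀ j, g (2*j+1) = 0 := by
    intro j; rw [hg]; simp only; rw [gauss01_odd]; ring
  rw [sum_even g hodd k]
  rw [← Finset.sum_range_reflect (fun j => g (2*j)) (k+1)]
  unfold F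
  refine Finset.sum_congr rfl fun j hj => ?_
  have hjk : j ≤ k := Nat.lt_succ_iff.mp (Finset.mem_range.mp hj)
  rw [hg]
  simp only
  rw [show k + 1 - 1 - j = k - j by omega]
  rw [gauss01_even (k - j)]
  rw [show 2*k - 2*(k-j) = 2*j by omega]
  have hch : ((2*k).choose (2*(k-j)) : ℝ) = ((2*k).choose (2*j) : ℝ) := by
    rw [show 2*(k-j) = 2*k - 2*j by omega, Nat.choose_symm (by omega)]
  have hcid := coeff_id (m := k - j) (k := k) (by omega)
  rw [show k - (k-j) = j by omega] at hcid
  rw [hch, Nat.choose_symm hjk] at hcid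
  have hprod : R k / R j = ∏ l ∈ Ico j k, (2*(l:ℝ)+1) := by
    have hp := prod_odd j (k - j)
    rw [show j + (k-j) = k by omega] at hp
    exact hp.symm
  rw [hch]
  have h2 : ∏ l ∈ Ico j k, ((1:ℝ) + 2 * l) = ∏ l ∈ Ico j k, (2*(l:ℝ)+1) :=
    Finset.prod_congr rfl fun l _ => by ring
  rw [h2, ← hprod, ← pow_mul]
  linear_combination (c ^ (2*j)) * hcid
lemma F_zero_left (n : ℕ) : F 0 0 n = (0:ℝ)^n := by
  cases n with
  | zero => simp [F]
  | succ n =>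
    rw [show ((0:ℝ)^(n+1)) = 0 by simp]
    unfold F
    refine Finset.sum_eq_zero fun j hj => ?_
    rcases Nat.eq_zero_or_pos j with hj0 | hj0
    · subst hj0
      have : ∏ l ∈ Finset.Ico 0 (n+1), ((0:ℝ) + 2 * l) = 0 :=
        Finset.prod_eq_zero (Finset.mem_Ico.mpr ⟨le_refl 0, Nat.succ_pos n⟩) (by norm_num)
      rw [this]; ring
    · rw [zero_pow (by omega)]; ring

lemma pi_moment (ν : ℕ) : ∀ (μ : Fin ν → ℝ) (n : ℕ),
    Integrable (fun x : Fin ν → ℝ => (∑ t, x t ^ 2) ^ n)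
      (Measure.pi fun t => gaussianReal (μ t) 1) ∧
    ∫ x : Fin ν → ℝ, (∑ t, x t ^ 2) ^ n ∂(Measure.pi fun t => gaussianReal (μ t) 1)
      = F ν (∑ t, μ t ^ 2) n := by
  induction ν with
  | zero =>
    intro μ n
    rw [show (fun x : Fin 0 → ℝ => (∑ t, x t ^ 2) ^ n) = fun _ => (0:ℝ)^n from
      funext fun x => by simp]
    constructor
    · exact integrable_const _
    · rw [integral_const]
      simp [F_zero_left]
  | succ ν ih =>
    intro μ n
    set P := Measure.pi fun t : Fin (ν+1) => gaussianReal (μ t) 1 with hP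
    set Q := (gaussianReal (μ 0) 1).prod
      (Measure.pi fun j : Fin ν => gaussianReal (μ j.succ) 1) with hQ
    set e := MeasurableEquiv.piFinSuccAbove (fun _ : Fin (ν+1) => ℝ) 0 with he
    have hmp : MeasurePreserving (⇑e) P Q := by
      have h := measurePreserving_piFinSuccAbove (fun t : Fin (ν+1) => gaussianReal (μ t) 1) 0
      simpa only [Fin.zero_succAbove] using h
    set h : ℝ × (Fin ν → ℝ) → ℝ := fun z =>
      ∑ k ∈ range (n+1), z.1 ^ (2*k) * ((∑ j, z.2 j ^ 2) ^ (n-k) * (n.choose k : ℝ)) with hh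
    have hcomp : (fun x : Fin (ν+1) → ℝ => (∑ t, x t ^ 2) ^ n) = h ∘ ⇑e := by
      funext x
      show (∑ t, x t ^ 2) ^ n = h (x 0, fun j => x ((0 : Fin (ν+1)).succAbove j))
      rw [hh]
      simp only [Fin.zero_succAbove]
      rw [Fin.sum_univ_succ (fun t => x t ^ 2), add_pow]
      refine Finset.sum_congr rfl fun k _ => ?_
      rw [← pow_mul]
      ring
    have hint : ∀ k ∈ range (n+1), Integrable (fun z : ℝ × (Fin ν → ℝ) =>
        z.1 ^ (2*k) * ((∑ j, z.2 j ^ 2) ^ (n-k) * (n.choose k : ℝ))) Q := by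
      intro k _
      exact (integrable_pow_gauss (μ 0) (2*k)).mul_prod
        (((ih (fun j => μ j.succ) (n-k)).1).mul_const _)
    have hIntQ : Integrable h Q := by
      rw [hh]
      exact integrable_finset_sum _ hint
    have hIntP : Integrable (fun x : Fin (ν+1) → ℝ => (∑ t, x t ^ 2) ^ n) P := by
      rw [hcomp, ← e.measurableEmbedding.integrable_map_iff, hmp.map_eq]
      exact hIntQ
    refine ⟨hIntP, ?_⟩
    have step1 : ∫ x : Fin (ν+1) → ℝ, (∑ t, x t ^ 2) ^ n ∂P = ∫ z, h z ∂Q := by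
      rw [hcomp, ← hmp.map_eq]
      exact (integral_map_equiv e h).symm
    rw [step1, hh, integral_finset_sum _ hint]
    have step2 : ∀ k ∈ range (n+1),
        ∫ z : ℝ × (Fin ν → ℝ), z.1 ^ (2*k) * ((∑ j : Fin ν, z.2 j ^ 2) ^ (n-k) * (n.choose k : ℝ)) ∂Q
        = (n.choose k : ℝ) * F 1 ((μ 0)^2) k * F ν (∑ j : Fin ν, μ j.succ ^ 2) (n - k) := by
      intro k _
      have hpm := integral_prod_mul (μ := gaussianReal (μ 0) 1)
        (ν := Measure.pi fun j : Fin ν => gaussianReal (μ j.succ) 1)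
        (f := fun y => y ^ (2*k))
        (g := fun w => (∑ j : Fin ν, w j ^ 2) ^ (n-k) * (n.choose k : ℝ))
      rw [hQ, hpm, MeasureTheory.integral_mul_const, gauss_moment (μ 0) k,
        (ih (fun j => μ j.succ) (n-k)).2]
      ring
    rw [Finset.sum_congr rfl step2, F_conv n 1 ν (∑ j : Fin ν, μ j.succ ^ 2) ((μ 0)^2)]
    have h1 : (1:ℝ) + ν = ((ν+1 : ℕ):ℝ) := by push_cast; ring
    have h2 : (∑ j : Fin ν, μ j.succ ^ 2) + (μ 0)^2 = ∑ t : Fin (ν+1), μ t ^ 2 := by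
      rw [Fin.sum_univ_succ (fun t => μ t ^ 2)]
      ring
    rw [h1, h2]
lemma bridge (x δ : ℝ) (n : ℕ) :
    ∑ m ∈ Finset.range (n + 1),
      (n.choose m : ℝ) * (∏ i ∈ Finset.Icc 1 m, (x + 2 * ((n : ℝ) - (i : ℝ)))) * δ ^ (n - m)
    = F x δ n := by
  rw [← Finset.sum_range_reflect
    (fun m => (n.choose m : ℝ) * (∏ i ∈ Finset.Icc 1 m, (x + 2 * ((n : ℝ) - (i : ℝ)))) * δ ^ (n - m))
    (n+1)]
  unfold F
  refine Finset.sum_congr rfl fun j hj => ?_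
  have hjn : j ≤ n := Nat.lt_succ_iff.mp (Finset.mem_range.mp hj)
  rw [show n + 1 - 1 - j = n - j by omega]
  rw [Nat.choose_symm hjn]
  rw [show n - (n - j) = j by omega]
  have hprod : ∏ i ∈ Finset.Icc 1 (n - j), (x + 2 * ((n : ℝ) - (i : ℝ)))
      = ∏ l ∈ Finset.Ico j n, (x + 2 * (l : ℝ)) := by
    refine Finset.prod_nbij' (fun i => n - i) (fun l => n - l) ?_ ?_ ?_ ?_ ?_
    · intro a ha
      rw [Finset.mem_Icc] at ha
      rw [Finset.mem_Ico]
      omega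
    · intro a ha
      rw [Finset.mem_Ico] at ha
      rw [Finset.mem_Icc]
      omega
    · intro a ha
      rw [Finset.mem_Icc] at ha
      omega
    · intro a ha
      rw [Finset.mem_Ico] at ha
      omega
    · intro a ha
      rw [Finset.mem_Icc] at ha
      rw [Nat.cast_sub (by omega : a ≤ n)]
  rw [hprod]
  ring

theorem stmt_5 (ν : ℕ) (hν : 1 ≤ ν) (μ : Fin ν → ℝ) (δ : ℝ)
    (hδ : δ = ∑ t, μ t ^ 2) (n : ℕ) :
    ∫ x : Fin ν → ℝ, (∑ t, x t ^ 2) ^ n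
      ∂(Measure.pi fun t : Fin ν => gaussianReal (μ t) 1) =
    ∑ m ∈ Finset.range (n + 1),
      (n.choose m : ℝ) * (∏ i ∈ Finset.Icc 1 m, ((ν : ℝ) + 2 * ((n : ℝ) - (i : ℝ)))) *
        δ ^ (n - m) := by
  rw [hδ, bridge ((ν:ℕ):ℝ) (∑ t, μ t ^ 2) n]
  exact (pi_moment ν μ n).2
end

section
/- Let ν ≥ 1 be a natural number, let μ : Fin ν → ℝ, set δ = Σ_{t=1}^{ν} μ_t², and let t be a real number with t < 1/2. Then the integral of exp(t · Σ_{s=1}^{ν} x_s²) over (Fin ν) → ℝ with respect to the product measure Π_s gaussianReal (μ s) 1 equals (1 − 2t)^{−ν/2} · exp(δ·t/(1 − 2t)). -/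
open MeasureTheory ProbabilityTheory Finset

lemma integral_rexp_quadratic' {b : ℝ} (hb : b < 0) (c d : ℝ) :
    ∫ x : ℝ, Real.exp (b * x ^ 2 + c * x + d)
      = (Real.pi / -b) ^ ((1 : ℝ) / 2) * Real.exp (d - c ^ 2 / (4 * b)) := by
  have hb' : (b : ℂ).re < 0 := by simpa using hb
  have h := integral_cexp_quadratic hb' (c : ℂ) (d : ℂ)
  have h1 : ∫ x : ℝ, Complex.exp ((b : ℂ) * x ^ 2 + c * x + d)
      = ((∫ x : ℝ, Real.exp (b * x ^ 2 + c * x + d) : ℝ) : ℂ) := by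
    calc ∫ x : ℝ, Complex.exp ((b : ℂ) * x ^ 2 + c * x + d)
        = ∫ x : ℝ, ((Real.exp (b * x ^ 2 + c * x + d) : ℝ) : ℂ) := by
          congr 1; ext x; rw [Complex.ofReal_exp]; congr 1; push_cast; ring
      _ = ((∫ x : ℝ, Real.exp (b * x ^ 2 + c * x + d) : ℝ) : ℂ) := integral_ofReal
  have h2 : ((Real.pi / -b : ℂ)) ^ ((1 : ℂ) / 2) * Complex.exp ((d : ℂ) - c ^ 2 / (4 * b))
      = (((Real.pi / -b) ^ ((1 : ℝ) / 2) * Real.exp (d - c ^ 2 / (4 * b)) : ℝ) : ℂ) := by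
    have hpos : (0 : ℝ) ≤ Real.pi / -b :=
      div_nonneg Real.pi_pos.le (neg_nonneg.mpr hb.le)
    rw [Complex.ofReal_mul, Complex.ofReal_exp, Complex.ofReal_cpow hpos]
    push_cast
    norm_num
  rw [h1, h2] at h
  exact_mod_cast h

lemma gauss_mgf_sq (m : ℝ) {t : ℝ} (ht : t < 1 / 2) :
    ∫ x : ℝ, Real.exp (t * x ^ 2) ∂(gaussianReal m 1)
      = (1 - 2 * t) ^ (-(1 : ℝ) / 2) * Real.exp (m ^ 2 * t / (1 - 2 * t)) := by
  have h1t : (0 : ℝ) < 1 - 2 * t := by linarith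
  rw [gaussianReal_of_var_ne_zero m one_ne_zero]
  have hmeas : Measurable fun x : ℝ => (gaussianPDFReal m 1 x).toNNReal :=
    (measurable_gaussianPDFReal m 1).real_toNNReal
  have hden : gaussianPDF m 1 = fun x => ((gaussianPDFReal m 1 x).toNNReal : ENNReal) := by
    ext x; rfl
  rw [hden, integral_withDensity_eq_integral_smul hmeas]
  have heq : ∀ x : ℝ, (gaussianPDFReal m 1 x).toNNReal • Real.exp (t * x ^ 2)
      = Real.exp ((t - 1 / 2) * x ^ 2 + m * x + (-(m ^ 2) / 2)) * (Real.sqrt (2 * Real.pi))⁻¹ := by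
    intro x
    rw [NNReal.smul_def, smul_eq_mul, Real.coe_toNNReal _ (gaussianPDFReal_nonneg m 1 x), gaussianPDFReal]
    rw [NNReal.coe_one, mul_one, mul_one, mul_assoc, ← Real.exp_add, mul_comm]
    congr 2
    ring
  simp_rw [heq]
  rw [integral_mul_const, integral_rexp_quadratic' (by linarith : t - 1 / 2 < 0)]
  have hco : (Real.pi / -(t - 1 / 2)) ^ ((1 : ℝ) / 2) * (Real.sqrt (2 * Real.pi))⁻¹
      = (1 - 2 * t) ^ (-(1 : ℝ) / 2) := by
    have h2pi : (0 : ℝ) < 2 * Real.pi := by positivity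
    have : Real.pi / -(t - 1 / 2) = (2 * Real.pi) / (1 - 2 * t) := by
      rw [div_eq_div_iff (by linarith : (0:ℝ) < -(t - 1/2)).ne' h1t.ne']
      ring
    rw [this, Real.div_rpow h2pi.le h1t.le, Real.sqrt_eq_rpow,
      div_mul_eq_mul_div, mul_inv_cancel₀ (by positivity), one_div,
      ← Real.rpow_neg_one, ← Real.rpow_mul h1t.le]
    norm_num
  have hex : -(m ^ 2) / 2 - m ^ 2 / (4 * (t - 1 / 2)) = m ^ 2 * t / (1 - 2 * t) := by
    have h : (1 : ℝ) - 2 * t ≠ 0 := ne_of_gt h1t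
    have e1 : (4 : ℝ) * (t - 1 / 2) = -(2 * (1 - 2 * t)) := by ring
    rw [e1, div_neg, sub_neg_eq_add, div_add_div _ _ two_ne_zero (mul_ne_zero two_ne_zero h),
      div_eq_div_iff (mul_ne_zero two_ne_zero (mul_ne_zero two_ne_zero h)) h]
    ring
  rw [mul_right_comm, hco, hex]

theorem stmt_6 (ν : ℕ) (hν : 1 ≤ ν) (μ : Fin ν → ℝ) (δ : ℝ)
    (hδ : δ = ∑ t, μ t ^ 2) (t : ℝ) (ht : t < 1 / 2) :
    ∫ x : Fin ν → ℝ, Real.exp (t * ∑ s, x s ^ 2)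
      ∂(Measure.pi fun s : Fin ν => gaussianReal (μ s) 1) =
    (1 - 2 * t) ^ (-(ν : ℝ) / 2) * Real.exp (δ * t / (1 - 2 * t)) := by
  have h1t : (0 : ℝ) < 1 - 2 * t := by linarith
  have key : (∫ x : Fin ν → ℝ, ∏ s, Real.exp (t * x s ^ 2)
        ∂(Measure.pi fun s : Fin ν => gaussianReal (μ s) 1))
      = ∏ i : Fin ν, ∫ x : ℝ, Real.exp (t * x ^ 2) ∂(gaussianReal (μ i) 1) :=
    MeasureTheory.integral_fintype_prod_eq_prod (E := fun _ => ℝ)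
      (fun s x => Real.exp (t * x ^ 2)) (μ := fun i => gaussianReal (μ i) 1)
  have hfac : ∀ x : Fin ν → ℝ, Real.exp (t * ∑ s, x s ^ 2)
      = ∏ s, Real.exp (t * x s ^ 2) := by
    intro x
    rw [← Real.exp_sum, Finset.mul_sum]
  simp_rw [hfac]
  rw [key]
  have h1 : ∀ i : Fin ν, (∫ x : ℝ, Real.exp (t * x ^ 2) ∂(gaussianReal (μ i) 1))
      = (1 - 2 * t) ^ (-(1 : ℝ) / 2) * Real.exp ((μ i) ^ 2 * t / (1 - 2 * t)) :=
    fun i => gauss_mgf_sq (μ i) ht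
  calc (∏ i : Fin ν, ∫ x : ℝ, Real.exp (t * x ^ 2) ∂(gaussianReal (μ i) 1))
      = ∏ i : Fin ν, ((1 - 2 * t) ^ (-(1 : ℝ) / 2) * Real.exp ((μ i) ^ 2 * t / (1 - 2 * t))) := by
        exact Finset.prod_congr rfl fun i _ => h1 i
    _ = ((1 - 2 * t) ^ (-(1 : ℝ) / 2)) ^ ν * Real.exp (∑ i, (μ i) ^ 2 * t / (1 - 2 * t)) := by
        rw [Finset.prod_mul_distrib, Finset.prod_const, Real.exp_sum, Finset.card_univ,
          Fintype.card_fin]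
    _ = (1 - 2 * t) ^ (-(ν : ℝ) / 2) * Real.exp (δ * t / (1 - 2 * t)) := by
        rw [← Real.rpow_natCast ((1 - 2 * t) ^ (-(1 : ℝ) / 2)) ν, ← Real.rpow_mul h1t.le]
        congr 1
        · congr 1
          ring
        · congr 1
          rw [hδ, Finset.sum_mul, Finset.sum_div]
end

section
/- Let ν > 0 and x be real numbers and let n be a natural number. Define g : ℝ → ℝ by g(σ) = σ^{−ν/2} · exp(−x/(2σ)) (using the real power function). Then 2^n · (iteratedDeriv n g) 1 = exp(−x/2) · (−1)^n · Σ_{m=0}^{n} C(n,m) · (∏_{i=1}^{m} (ν + 2(n−i))) · (−x)^{n−m}. -/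
open Finset

noncomputable def Pnu (ν : ℝ) (n m : ℕ) : ℝ := ∏ i ∈ Finset.Icc 1 m, (ν + 2*((n:ℝ) - (i:ℝ)))

lemma Pnu_zero (ν : ℝ) (n : ℕ) : Pnu ν n 0 = 1 := by simp [Pnu]

lemma Pnu_succ (ν : ℝ) (n m : ℕ) :
    Pnu ν n (m+1) = Pnu ν n m * (ν + 2*((n:ℝ) - ((m:ℝ)+1))) := by
  unfold Pnu
  rw [Finset.prod_Icc_succ_top (Nat.succ_le_succ (Nat.zero_le m))]
  push_cast; ring_nf

lemma Pnu_shift (ν : ℝ) (n m : ℕ) : Pnu ν (n+1) (m+1) = (ν + 2*(n:ℝ)) * Pnu ν n m := by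
  induction m with
  | zero => rw [Pnu_succ, Pnu_zero, Pnu_zero]; push_cast; ring
  | succ m ih => rw [Pnu_succ, ih, Pnu_succ]; push_cast; ring

lemma hasDerivAt_term (x p : ℝ) {σ : ℝ} (hσ : 0 < σ) :
    HasDerivAt (fun σ : ℝ => Real.exp (-x/(2*σ)) * σ ^ p)
      (Real.exp (-x/(2*σ)) * ((x/2) * σ ^ (p-2) + p * σ ^ (p-1))) σ := by
  have hne : σ ≠ 0 := hσ.ne'
  have h1 : HasDerivAt (fun σ : ℝ => -x/(2*σ)) (x/2 * (σ^2)⁻¹) σ := by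
    have h := (hasDerivAt_inv hne).const_mul (-x/2)
    convert h using 1
    · rfl
    · rfl
    · funext y; simp [div_eq_mul_inv, mul_inv]; ring
    · ring
  have h2 : HasDerivAt (fun σ : ℝ => Real.exp (-x/(2*σ)))
      (Real.exp (-x/(2*σ)) * (x/2 * (σ^2)⁻¹)) σ := (Real.hasDerivAt_exp _).comp σ h1
  have h3 : HasDerivAt (fun σ : ℝ => σ ^ p) (p * σ ^ (p-1)) σ :=
    Real.hasDerivAt_rpow_const (Or.inl hne)
  have h4 := h2.mul h3
  convert h4 using 1
  · rfl
  · rfl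
  · rfl
  have hs2 : σ ^ (p - 2) = σ ^ p * (σ^2)⁻¹ := by
    rw [show p - 2 = p + (-2) by ring, Real.rpow_add hσ, Real.rpow_neg hσ.le,
      show ((2:ℝ) = ((2:ℕ):ℝ)) by norm_num, Real.rpow_natCast]
  rw [hs2]; ring

-- per-term identity for 0 ≤ m < n, s an arbitrary real (will be σ^(q (m+1)))
lemma mid_term (ν x s : ℝ) (n m : ℕ) (hm : m < n) :
    (n.choose (m+1) : ℝ) * Pnu ν n (m+1) * (-x)^(n-(m+1)) * ((x/2) * s)
      + (n.choose m : ℝ) * Pnu ν n m * (-x)^(n-m) * (((m:ℝ) - 2*n - ν/2) * s)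
    = (-2:ℝ)⁻¹ * (((n+1).choose (m+1) : ℝ) * Pnu ν (n+1) (m+1) * (-x)^(n+1-(m+1)) * s) := by
  obtain ⟨k, hk⟩ : ∃ k, n - (m+1) = k := ⟨_, rfl⟩
  have hk1 : n - m = k + 1 := by omega
  have hk2 : n + 1 - (m+1) = k + 1 := by omega
  have h1 : ((n.choose (m+1)) : ℝ) * ((m:ℝ)+1) = (n.choose m : ℝ) * ((n:ℝ) - (m:ℝ)) := by
    have := Nat.choose_succ_right_eq n m
    have hc : ((n.choose (m+1) * (m+1) : ℕ) : ℝ) = ((n.choose m * (n - m) : ℕ) : ℝ) := by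
      exact_mod_cast congrArg (Nat.cast (R := ℝ)) this
    push_cast [Nat.cast_sub (le_of_lt hm)] at hc
    linarith [hc]
  have h2 : (((n+1).choose (m+1)) : ℝ) = (n.choose m : ℝ) + (n.choose (m+1) : ℝ) := by
    rw [Nat.choose_succ_succ']; push_cast; ring
  rw [hk, hk1, hk2, Pnu_succ, Pnu_shift, pow_succ]
  linear_combination (((2:ℝ))⁻¹ * (ν + 2*(n:ℝ)) * Pnu ν n m * ((-x)^k * (-x)) * s) * h2
    + ((-x)^k * (-x) * s * Pnu ν n m) * h1

lemma sum_step (ν x σ : ℝ) (n : ℕ) :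
    ∑ m ∈ range (n+1), (n.choose m : ℝ) * Pnu ν n m * (-x)^(n-m) *
      ((x/2) * σ ^ ((m:ℝ) - 2*(n:ℝ) - ν/2 - 2) + ((m:ℝ) - 2*(n:ℝ) - ν/2) * σ ^ ((m:ℝ) - 2*(n:ℝ) - ν/2 - 1))
    = (-2:ℝ)⁻¹ * ∑ m ∈ range (n+1+1),
        ((n+1).choose m : ℝ) * Pnu ν (n+1) m * (-x)^(n+1-m) * σ ^ ((m:ℝ) - 2*((n:ℝ)+1) - ν/2) := by
  have hexp1 : ∀ m : ℕ, ((m:ℝ) - 2*(n:ℝ) - ν/2 - 2) = ((m:ℝ) - 2*((n:ℝ)+1) - ν/2) := by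
    intro m; ring
  have hexp2 : ∀ m : ℕ, ((m:ℝ) - 2*(n:ℝ) - ν/2 - 1) = (((m+1:ℕ):ℝ) - 2*((n:ℝ)+1) - ν/2) := by
    intro m; push_cast; ring
  set Q : ℕ → ℝ := fun m => σ ^ ((m:ℝ) - 2*((n:ℝ)+1) - ν/2) with hQ
  set A : ℕ → ℝ := fun m => (n.choose m : ℝ) * Pnu ν n m * (-x)^(n-m) * ((x/2) * Q m) with hA
  set B : ℕ → ℝ := fun m =>
    (n.choose m : ℝ) * Pnu ν n m * (-x)^(n-m) * (((m:ℝ) - 2*(n:ℝ) - ν/2) * Q (m+1)) with hB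
  set G : ℕ → ℝ := fun m =>
    ((n+1).choose m : ℝ) * Pnu ν (n+1) m * (-x)^(n+1-m) * Q m with hG
  have step1 : ∑ m ∈ range (n+1), (n.choose m : ℝ) * Pnu ν n m * (-x)^(n-m) *
      ((x/2) * σ ^ ((m:ℝ) - 2*(n:ℝ) - ν/2 - 2) + ((m:ℝ) - 2*(n:ℝ) - ν/2) * σ ^ ((m:ℝ) - 2*(n:ℝ) - ν/2 - 1))
      = ∑ m ∈ range (n+1), (A m + B m) := by
    refine Finset.sum_congr rfl fun m hm => ?_
    rw [hexp1 m, hexp2 m, hA, hB, hQ]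
    push_cast
    ring
  have hA0 : A 0 = (-2:ℝ)⁻¹ * G 0 := by
    rw [hA, hG]; simp only [Nat.choose_zero_right, Pnu_zero, Nat.sub_zero, Nat.cast_one]
    rw [pow_succ]; ring
  have hBn : B n = (-2:ℝ)⁻¹ * G (n+1) := by
    rw [hB, hG]
    simp only [Nat.choose_self, Nat.sub_self, Nat.cast_one, pow_zero]
    rw [Pnu_shift]; ring
  have hmid : ∀ m ∈ range n, A (m+1) + B m = (-2:ℝ)⁻¹ * G (m+1) := by
    intro m hm
    rw [Finset.mem_range] at hm
    rw [hA, hB, hG]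
    exact mid_term ν x (Q (m+1)) n m hm
  rw [step1, Finset.sum_add_distrib, Finset.sum_range_succ' A n, Finset.sum_range_succ B n,
    Finset.sum_range_succ' G (n+1), Finset.sum_range_succ (fun m => G (m+1)) n]
  have : ∑ m ∈ range n, A (m+1) + ∑ m ∈ range n, B m
      = (-2:ℝ)⁻¹ * ∑ m ∈ range n, G (m+1) := by
    rw [← Finset.sum_add_distrib, Finset.mul_sum]
    exact Finset.sum_congr rfl hmid
  linarith [this, hA0, hBn]

lemma key (ν x : ℝ) (n : ℕ) : ∀ σ : ℝ, 0 < σ →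
    iteratedDeriv n (fun σ : ℝ => σ ^ (-(ν / 2)) * Real.exp (-x / (2 * σ))) σ =
    Real.exp (-x/(2*σ)) * ((2:ℝ)^n)⁻¹ * (-1)^n *
      ∑ m ∈ range (n+1), (n.choose m : ℝ) * Pnu ν n m * (-x)^(n-m) *
        σ ^ ((m:ℝ) - 2*(n:ℝ) - ν/2) := by
  induction n with
  | zero =>
    intro σ hσ
    rw [iteratedDeriv_zero]
    simp [Pnu_zero]
    ring
  | succ n ih =>
    intro σ hσ
    rw [iteratedDeriv_succ]
    have hev : iteratedDeriv n (fun σ : ℝ => σ ^ (-(ν / 2)) * Real.exp (-x / (2 * σ)))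
        =ᶠ[nhds σ] fun y : ℝ => Real.exp (-x/(2*y)) * ((2:ℝ)^n)⁻¹ * (-1)^n *
          ∑ m ∈ range (n+1), (n.choose m : ℝ) * Pnu ν n m * (-x)^(n-m) *
            y ^ ((m:ℝ) - 2*(n:ℝ) - ν/2) :=
      Filter.eventuallyEq_of_mem (isOpen_Ioi.mem_nhds hσ) (fun y hy => ih y hy)
    rw [hev.deriv_eq]
    have hfun : (fun y : ℝ => Real.exp (-x/(2*y)) * ((2:ℝ)^n)⁻¹ * (-1)^n *
          ∑ m ∈ range (n+1), (n.choose m : ℝ) * Pnu ν n m * (-x)^(n-m) *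
            y ^ ((m:ℝ) - 2*(n:ℝ) - ν/2))
        = fun y : ℝ => ((2:ℝ)^n)⁻¹ * (-1)^n *
          ∑ m ∈ range (n+1), (n.choose m : ℝ) * Pnu ν n m * (-x)^(n-m) *
            (Real.exp (-x/(2*y)) * y ^ ((m:ℝ) - 2*(n:ℝ) - ν/2)) := by
      funext y
      rw [Finset.mul_sum, Finset.mul_sum]
      refine Finset.sum_congr rfl fun m _ => by ring
    rw [hfun]
    have hder : HasDerivAt (fun y : ℝ => ((2:ℝ)^n)⁻¹ * (-1)^n *
          ∑ m ∈ range (n+1), (n.choose m : ℝ) * Pnu ν n m * (-x)^(n-m) *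
            (Real.exp (-x/(2*y)) * y ^ ((m:ℝ) - 2*(n:ℝ) - ν/2)))
        (((2:ℝ)^n)⁻¹ * (-1)^n *
          ∑ m ∈ range (n+1), (n.choose m : ℝ) * Pnu ν n m * (-x)^(n-m) *
            (Real.exp (-x/(2*σ)) * ((x/2) * σ ^ ((m:ℝ) - 2*(n:ℝ) - ν/2 - 2)
              + ((m:ℝ) - 2*(n:ℝ) - ν/2) * σ ^ ((m:ℝ) - 2*(n:ℝ) - ν/2 - 1)))) σ := by
      refine HasDerivAt.const_mul _ (HasDerivAt.fun_sum fun m _ => ?_)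
      exact (hasDerivAt_term x ((m:ℝ) - 2*(n:ℝ) - ν/2) hσ).const_mul _
    rw [hder.deriv]
    have hpull : ∑ m ∈ range (n+1), (n.choose m : ℝ) * Pnu ν n m * (-x)^(n-m) *
            (Real.exp (-x/(2*σ)) * ((x/2) * σ ^ ((m:ℝ) - 2*(n:ℝ) - ν/2 - 2)
              + ((m:ℝ) - 2*(n:ℝ) - ν/2) * σ ^ ((m:ℝ) - 2*(n:ℝ) - ν/2 - 1)))
        = Real.exp (-x/(2*σ)) * ∑ m ∈ range (n+1), (n.choose m : ℝ) * Pnu ν n m * (-x)^(n-m) *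
            ((x/2) * σ ^ ((m:ℝ) - 2*(n:ℝ) - ν/2 - 2)
              + ((m:ℝ) - 2*(n:ℝ) - ν/2) * σ ^ ((m:ℝ) - 2*(n:ℝ) - ν/2 - 1)) := by
      rw [Finset.mul_sum]
      refine Finset.sum_congr rfl fun m _ => by ring
    rw [hpull, sum_step ν x σ n]
    push_cast
    rw [pow_succ, pow_succ]
    ring


theorem stmt_7 (ν x : ℝ) (hν : 0 < ν) (n : ℕ) :
    2 ^ n * iteratedDeriv n (fun σ : ℝ => σ ^ (-(ν / 2)) * Real.exp (-x / (2 * σ))) 1 =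
    Real.exp (-x / 2) * (-1) ^ n *
      ∑ m ∈ Finset.range (n + 1),
        (n.choose m : ℝ) * (∏ i ∈ Finset.Icc 1 m, (ν + 2 * ((n : ℝ) - (i : ℝ)))) *
          (-x) ^ (n - m) := by
  have h := key ν x n 1 one_pos
  rw [h]
  have h1 : ∀ m : ℕ, (1:ℝ) ^ ((m:ℝ) - 2*(n:ℝ) - ν/2) = 1 := fun m => Real.one_rpow _
  have hsum : ∑ m ∈ range (n+1), (n.choose m : ℝ) * Pnu ν n m * (-x)^(n-m) *
        (1:ℝ) ^ ((m:ℝ) - 2*(n:ℝ) - ν/2)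
      = ∑ m ∈ Finset.range (n + 1),
        (n.choose m : ℝ) * (∏ i ∈ Finset.Icc 1 m, (ν + 2 * ((n : ℝ) - (i : ℝ)))) * (-x) ^ (n - m) := by
    refine Finset.sum_congr rfl fun m _ => ?_
    rw [h1 m, mul_one]
    rfl
  rw [hsum]
  rw [show -x/(2*(1:ℝ)) = -x/2 by norm_num]
  have h2 : (2:ℝ)^n ≠ 0 := by positivity
  field_simp
end

section
/- For all natural numbers m ≤ n with n ≥ 1, C(n,m) · ∏_{i=1}^{m} (2(n−i) + 1) = C(2n, 2m) · (2m−1)!!. -/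
open Finset Nat

lemma aux_prod_odd (n : ℕ) : ∀ m, m ≤ n →
    (∏ i ∈ Finset.Icc 1 m, (2 * (n - i) + 1)) * Nat.doubleFactorial (2 * (n - m) - 1)
      = Nat.doubleFactorial (2 * n - 1) := by
  intro m
  induction m with
  | zero => simp
  | succ m ih =>
    intro h
    have hm : m ≤ n := le_of_lt h
    rw [Finset.prod_Icc_succ_top (by omega : 1 ≤ m + 1)]
    have hk : 1 ≤ n - m := by omega
    have h1 : 2 * (n - m) - 1 = (2 * (n - (m+1)) + 1) := by omega
    have h2 : (2 * (n - (m+1)) + 1)‼ = (2 * (n - (m+1)) + 1) * (2 * (n - (m+1)) - 1)‼ := by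
      rcases Nat.eq_zero_or_pos (n - (m+1)) with h0 | h0
      · simp [h0]
      · have : 2 * (n - (m+1)) + 1 = (2 * (n - (m+1)) - 1) + 2 := by omega
        rw [this, Nat.doubleFactorial_add_two]
    rw [← ih hm, h1, h2]
    ring

lemma aux_fact_dd (k : ℕ) : k ! = (k)‼ * (k - 1)‼ := by
  cases k with
  | zero => rfl
  | succ k => simpa using Nat.factorial_eq_mul_doubleFactorial k

theorem stmt_8 (m n : ℕ) (hmn : m ≤ n) (hn : 1 ≤ n) :
    n.choose m * ∏ i ∈ Finset.Icc 1 m, (2 * (n - i) + 1) =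
    (2 * n).choose (2 * m) * Nat.doubleFactorial (2 * m - 1) := by
  set K := 2 ^ m * m ! * (2 * (n - m))! with hK
  have hKpos : 0 < K := by positivity
  apply Nat.eq_of_mul_eq_mul_right hKpos
  have h2mn : 2 * m ≤ 2 * n := by omega
  have hrhs : (2 * n).choose (2 * m) * (2 * m - 1)‼ * K = (2 * n)! := by
    have h1 : (2 * m - 1)‼ * (2 ^ m * m !) = (2 * m)! := by
      rw [← Nat.doubleFactorial_two_mul, aux_fact_dd (2 * m)]
      ring
    have h2 := Nat.choose_mul_factorial_mul_factorial h2mn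
    calc (2 * n).choose (2 * m) * (2 * m - 1)‼ * K
        = (2 * n).choose (2 * m) * ((2 * m - 1)‼ * (2 ^ m * m !)) * (2 * (n - m))! := by
          rw [hK]; ring
      _ = (2 * n).choose (2 * m) * (2 * m)! * (2 * (n - m))! := by rw [h1]
      _ = (2 * n)! := by rw [show 2 * (n - m) = 2 * n - 2 * m by omega]; exact h2
  have hlhs : n.choose m * (∏ i ∈ Finset.Icc 1 m, (2 * (n - i) + 1)) * K = (2 * n)! := by
    have hp := aux_prod_odd n m hmn
    have hf : (2 * (n - m))! = 2 ^ (n - m) * (n - m)! * (2 * (n - m) - 1)‼ := by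
      rw [aux_fact_dd (2 * (n - m)), Nat.doubleFactorial_two_mul]
    have hc := Nat.choose_mul_factorial_mul_factorial hmn
    calc n.choose m * (∏ i ∈ Finset.Icc 1 m, (2 * (n - i) + 1)) * K
        = (n.choose m * m ! * (n - m)!) * (2 ^ m * 2 ^ (n - m)) *
            ((∏ i ∈ Finset.Icc 1 m, (2 * (n - i) + 1)) * (2 * (n - m) - 1)‼) := by
          rw [hK, hf]; ring
      _ = n ! * 2 ^ n * (2 * n - 1)‼ := by
          rw [hc, hp, ← pow_add, Nat.add_sub_cancel' hmn]
      _ = (2 * n)! := by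
          rw [aux_fact_dd (2 * n), Nat.doubleFactorial_two_mul]; ring
  rw [hrhs, hlhs]
end

section
/- For every real number ν and all natural numbers 1 ≤ m ≤ n: C(n,m) · ∏_{i=1}^{m} (ν + 2n − 2i) − C(n−1,m) · ∏_{i=1}^{m} (ν + 2n − 2 − 2i) = (ν + 2(2n−m−1)) · C(n−1,m−1) · ∏_{i=1}^{m−1} (ν + 2n − 2 − 2i). -/
open Finset

theorem stmt_12 (ν : ℝ) (m n : ℕ) (hm : 1 ≤ m) (hmn : m ≤ n) :
    (n.choose m : ℝ) * (∏ i ∈ Finset.Icc 1 m, (ν + 2 * (n : ℝ) - 2 * (i : ℝ))) -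
      ((n - 1).choose m : ℝ) * (∏ i ∈ Finset.Icc 1 m, (ν + 2 * (n : ℝ) - 2 - 2 * (i : ℝ))) =
    (ν + 2 * (2 * (n : ℝ) - (m : ℝ) - 1)) * ((n - 1).choose (m - 1) : ℝ) *
      ∏ i ∈ Finset.Icc 1 (m - 1), (ν + 2 * (n : ℝ) - 2 - 2 * (i : ℝ)) := by
  obtain ⟨k, rfl⟩ : ∃ k, m = k + 1 := ⟨m - 1, (Nat.succ_pred_eq_of_pos hm).symm⟩
  obtain ⟨l, rfl⟩ : ∃ l, n = l + 1 := ⟨n - 1, (Nat.succ_pred_eq_of_pos (hm.trans hmn)).symm⟩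
  have hkl : k ≤ l := Nat.succ_le_succ_iff.mp hmn
  simp only [Nat.add_sub_cancel]
  set f : ℕ → ℝ := fun i => ν + 2 * (((l + 1 : ℕ)) : ℝ) - 2 * (i : ℝ) with hf
  have hQ : ∀ M : ℕ, (∏ i ∈ Finset.Icc 1 M, (ν + 2 * ((l + 1 : ℕ) : ℝ) - 2 - 2 * (i : ℝ)))
      = ∏ i ∈ Finset.Icc 2 (M + 1), f i := by
    intro M
    rw [show (2:ℕ) = 1 + 1 by rfl, ← Finset.map_add_right_Icc 1 M 1, Finset.prod_map]
    refine Finset.prod_congr rfl fun i _ => ?_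
    simp only [hf, addRightEmbedding, Function.Embedding.coeFn_mk]
    push_cast
    ring
  have hins : Finset.Icc 1 (k+1) = insert 1 (Finset.Icc 2 (k+1)) := by
    ext x; simp; omega
  have hP : (∏ i ∈ Finset.Icc 1 (k+1), f i) = f 1 * ∏ i ∈ Finset.Icc 2 (k+1), f i := by
    rw [hins, Finset.prod_insert (by simp)]
  have hQtop : (∏ i ∈ Finset.Icc 2 (k+1+1), f i)
      = (∏ i ∈ Finset.Icc 2 (k+1), f i) * f (k+1+1) :=
    Finset.prod_Icc_succ_top (by omega) f
  rw [show (∏ i ∈ Finset.Icc 1 (k+1), (ν + 2 * ((l + 1 : ℕ) : ℝ) - 2 * (i : ℝ)))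
      = ∏ i ∈ Finset.Icc 1 (k+1), f i from rfl, hP, hQ, hQ, hQtop]
  set R := ∏ i ∈ Finset.Icc 2 (k+1), f i
  have pascal : ((l+1).choose (k+1) : ℝ) = (l.choose k : ℝ) + (l.choose (k+1) : ℝ) := by
    rw [Nat.choose_succ_succ]; push_cast; ring
  have ratio : (l.choose (k+1) : ℝ) * (k+1) = (l.choose k : ℝ) * ((l:ℝ) - (k:ℝ)) := by
    have := Nat.choose_succ_right_eq l k
    have h2 : ((l - k : ℕ) : ℝ) = (l:ℝ) - (k:ℝ) := by
      rw [Nat.cast_sub hkl]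
    rw [← h2]
    exact_mod_cast congrArg (Nat.cast : ℕ → ℝ) this
  simp only [hf]
  push_cast
  linear_combination R * ((ν + 2*(l:ℝ)) * pascal + 2 * ratio)
end

section
/- For every real number ν and all natural numbers 1 ≤ m ≤ n: C(n,m) · ∏_{i=1}^{m} (ν + n − i) − C(n−1,m) · ∏_{i=1}^{m} (ν + n − 1 − i) = (ν + 2n − m − 1) · C(n−1,m−1) · ∏_{i=1}^{m−1} (ν + n − 1 − i). -/
open Finset

lemma stmt_13_shift (f : ℕ → ℝ) : ∀ k : ℕ,
    ∏ i ∈ Finset.Icc 1 (k + 1), f i = f 1 * ∏ i ∈ Finset.Icc 1 k, f (i + 1) := by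
  intro k
  induction k with
  | zero => simp
  | succ k ih =>
      rw [Finset.prod_Icc_succ_top (by omega) f, ih,
        Finset.prod_Icc_succ_top (by omega) (fun i => f (i + 1)), mul_assoc]

theorem stmt_13 (ν : ℝ) (m n : ℕ) (hm : 1 ≤ m) (hmn : m ≤ n) :
    (n.choose m : ℝ) * (∏ i ∈ Finset.Icc 1 m, (ν + (n : ℝ) - (i : ℝ))) -
      ((n - 1).choose m : ℝ) * (∏ i ∈ Finset.Icc 1 m, (ν + (n : ℝ) - 1 - (i : ℝ))) =
    (ν + 2 * (n : ℝ) - (m : ℝ) - 1) * ((n - 1).choose (m - 1) : ℝ) *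
      ∏ i ∈ Finset.Icc 1 (m - 1), (ν + (n : ℝ) - 1 - (i : ℝ)) := by
  obtain ⟨k, rfl⟩ : ∃ k, m = k + 1 := ⟨m - 1, (Nat.succ_pred_eq_of_pos hm).symm⟩
  obtain ⟨l, rfl⟩ : ∃ l, n = l + 1 := ⟨n - 1, (Nat.succ_pred_eq_of_pos (hm.trans hmn)).symm⟩
  have hkl : k ≤ l := Nat.succ_le_succ_iff.mp hmn
  simp only [Nat.add_sub_cancel]
  push_cast
  set A : ℝ := ∏ i ∈ Finset.Icc 1 k, (ν + ((l : ℝ) + 1) - 1 - (i : ℝ)) with hA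
  have h1 : (∏ i ∈ Finset.Icc 1 (k + 1), (ν + ((l : ℝ) + 1) - (i : ℝ)))
      = (ν + l) * A := by
    rw [stmt_13_shift (fun i : ℕ => ν + ((l : ℝ) + 1) - (i : ℝ)) k, hA]
    push_cast
    congr 1
    · ring
    · apply Finset.prod_congr rfl
      intro i _
      push_cast
      ring
  have h2 : (∏ i ∈ Finset.Icc 1 (k + 1), (ν + ((l : ℝ) + 1) - 1 - (i : ℝ)))
      = A * (ν + l - (k + 1)) := by
    rw [Finset.prod_Icc_succ_top (by omega), hA]
    push_cast
    ring
  rw [h1, h2]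
  have hc1 : ((l + 1).choose (k + 1) : ℝ) = (l.choose k : ℝ) + (l.choose (k + 1) : ℝ) := by
    rw [Nat.choose_succ_succ]; push_cast; ring
  have hc2 : ((k : ℝ) + 1) * (l.choose (k + 1) : ℝ) = ((l : ℝ) - k) * (l.choose k : ℝ) := by
    have h4 : (l.choose (k + 1) : ℝ) * ((k : ℝ) + 1) = (l.choose k : ℝ) * ((l : ℝ) - k) := by
      rw [← Nat.cast_sub hkl]
      exact_mod_cast Nat.choose_succ_right_eq l k
    linarith
  rw [hc1]
  linear_combination A * hc2
end

section
/- Let μ be a real number, let v ≥ 0, and let n be a natural number. Then the n-th raw moment of the Gaussian measure with mean μ and variance v satisfies ∫ x^n d(gaussianReal μ v)(x) = Σ_{m=0}^{⌊n/2⌋} (n! / ((n−2m)! · 2^m · m!)) · v^m · μ^{n−2m}. -/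
open MeasureTheory ProbabilityTheory Finset Real Set

lemma aux_gamma (m : ℕ) :
    Real.Gamma ((m : ℝ) + 1/2) =
      (Nat.factorial (2*m) : ℝ) / (4^m * Nat.factorial m) * √π := by
  induction m with
  | zero => simpa using Real.Gamma_one_half_eq
  | succ m ih =>
    have h : ((m+1 : ℕ) : ℝ) + 1/2 = ((m : ℝ) + 1/2) + 1 := by push_cast; ring
    rw [h, Real.Gamma_add_one (by positivity), ih]
    have h2 : 2 * (m+1) = (2*m+1) + 1 := by ring
    rw [h2, Nat.factorial_succ, Nat.factorial_succ, Nat.factorial_succ]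
    have hm : (Nat.factorial m : ℝ) ≠ 0 := Nat.cast_ne_zero.mpr (Nat.factorial_ne_zero m)
    field_simp
    push_cast
    ring

lemma aux_integrable {b : ℝ} (hb : 0 < b) (k : ℕ) :
    Integrable fun x : ℝ => x ^ k * rexp (-b * x^2) := by
  have := integrable_rpow_mul_exp_neg_mul_sq hb (s := (k:ℝ))
    (by exact_mod_cast neg_one_lt_zero.trans_le (Nat.cast_nonneg k))
  simpa [Real.rpow_natCast] using this

lemma aux_even_int {b : ℝ} (hb : 0 < b) (m : ℕ) :
    ∫ x : ℝ, x ^ (2*m) * rexp (-b * x^2) =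
      (Nat.factorial (2*m) : ℝ) / (4^m * Nat.factorial m * b^m) * √(π/b) := by
  have hint := aux_integrable hb (2*m)
  have hsplit : (∫ x in Iic (0:ℝ), x ^ (2*m) * rexp (-b * x^2))
      + ∫ x in Ioi (0:ℝ), x ^ (2*m) * rexp (-b * x^2)
      = ∫ x : ℝ, x ^ (2*m) * rexp (-b * x^2) :=
    intervalIntegral.integral_Iic_add_Ioi hint.integrableOn hint.integrableOn
  have hneg : (∫ x in Iic (0:ℝ), x ^ (2*m) * rexp (-b * x^2))
      = ∫ x in Ioi (0:ℝ), x ^ (2*m) * rexp (-b * x^2) := by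
    rw [← neg_zero, ← integral_comp_neg_Iic]
    simp [neg_pow, pow_mul]
  have hIoi : (∫ x in Ioi (0:ℝ), x ^ (2*m) * rexp (-b * x^2))
      = b ^ (-(((2*m : ℕ):ℝ) + 1) / 2) * (1 / 2) * Real.Gamma ((((2*m:ℕ):ℝ) + 1) / 2) := by
    rw [← integral_rpow_mul_exp_neg_mul_rpow two_pos
      (by exact_mod_cast neg_one_lt_zero.trans_le (Nat.cast_nonneg (2*m))) hb]
    refine setIntegral_congr_fun measurableSet_Ioi (fun x hx => ?_)
    rw [Real.rpow_natCast]
    norm_num [Real.rpow_two]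
  rw [← hsplit, hneg, ← two_mul, hIoi]
  have hgamma : (((2*m:ℕ):ℝ) + 1) / 2 = (m : ℝ) + 1/2 := by push_cast; ring
  have hb' : b ^ (-(((2*m : ℕ):ℝ) + 1) / 2) = (b^m)⁻¹ * (√b)⁻¹ := by
    rw [show (-(((2*m : ℕ):ℝ) + 1) / 2) = (-(m:ℝ)) + (-(1/2)) by push_cast; ring,
      Real.rpow_add hb, Real.rpow_neg hb.le, Real.rpow_natCast,
      Real.rpow_neg hb.le, ← Real.sqrt_eq_rpow]
  rw [hb', hgamma, aux_gamma, Real.sqrt_div pi_pos.le b]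
  have h1 : √b ≠ 0 := (Real.sqrt_pos.mpr hb).ne'
  have h2 : (b:ℝ)^m ≠ 0 := pow_ne_zero _ hb.ne'
  have h3 : (Nat.factorial m : ℝ) ≠ 0 := Nat.cast_ne_zero.mpr (Nat.factorial_ne_zero m)
  field_simp

lemma aux_odd_int (b : ℝ) (m : ℕ) :
    ∫ x : ℝ, x ^ (2*m+1) * rexp (-b * x^2) = 0 := by
  have h : (∫ x : ℝ, (fun y : ℝ => y ^ (2*m+1) * rexp (-b * y^2)) (-x))
      = ∫ x : ℝ, x ^ (2*m+1) * rexp (-b * x^2) :=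
    integral_neg_eq_self (fun y : ℝ => y ^ (2*m+1) * rexp (-b * y^2)) volume
  have h2 : ∀ x : ℝ, (-x) ^ (2*m+1) * rexp (-b * (-x)^2)
      = -(x ^ (2*m+1) * rexp (-b * x^2)) := by
    intro x
    rw [Odd.neg_pow ⟨m, by ring⟩, neg_sq, neg_mul]
  simp_rw [h2, integral_neg] at h
  linarith

lemma gaussian_integral_eq {μ : ℝ} {v : NNReal} (hv : v ≠ 0) (g : ℝ → ℝ) :
    ∫ x, g x ∂(gaussianReal μ v) = ∫ x, gaussianPDFReal μ v x * g x := by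
  rw [gaussianReal_of_var_ne_zero _ hv]
  have h : (volume : Measure ℝ).withDensity (gaussianPDF μ v)
      = (volume : Measure ℝ).withDensity
        (fun x => ((gaussianPDFReal μ v x).toNNReal : ENNReal)) := rfl
  rw [h, integral_withDensity_eq_integral_smul
    (measurable_gaussianPDFReal μ v).real_toNNReal g]
  refine integral_congr_ae (Filter.Eventually.of_forall fun x => ?_)
  simp [NNReal.smul_def, Real.coe_toNNReal _ (gaussianPDFReal_nonneg μ v x)]

lemma pdf_zero_eq {v : NNReal} (x : ℝ) :
    gaussianPDFReal 0 v x = (√(2*π*(v:ℝ)))⁻¹ * rexp (-(2*(v:ℝ))⁻¹ * x^2) := by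
  rw [gaussianPDFReal, sub_zero]
  congr 1
  ring

lemma pow_integrable {v : NNReal} (hv : v ≠ 0) (k : ℕ) :
    Integrable (fun x : ℝ => x ^ k) (gaussianReal 0 v) := by
  have hv' : 0 < (v:ℝ) := by
    simpa using (pos_iff_ne_zero.mpr hv : 0 < v)
  have hbpos : (0:ℝ) < (2*(v:ℝ))⁻¹ := by positivity
  rw [gaussianReal_of_var_ne_zero _ hv,
    integrable_withDensity_iff (measurable_gaussianPDF 0 v)
      (Filter.Eventually.of_forall fun x => ENNReal.ofReal_lt_top)]
  have heq : (fun x : ℝ => x ^ k * (gaussianPDF 0 v x).toReal)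
      = fun x : ℝ => (√(2*π*(v:ℝ)))⁻¹ * (x ^ k * rexp (-(2*(v:ℝ))⁻¹ * x^2)) := by
    ext x
    rw [gaussianPDF, ENNReal.toReal_ofReal (gaussianPDFReal_nonneg 0 v x), pdf_zero_eq]
    ring
  rw [heq]
  exact (aux_integrable hbpos k).const_mul _

lemma centered_even {v : NNReal} (hv : v ≠ 0) (m : ℕ) :
    ∫ x, x ^ (2*m) ∂(gaussianReal 0 v)
      = (Nat.factorial (2*m) : ℝ) / (2^m * Nat.factorial m) * (v:ℝ)^m := by
  have hv' : 0 < (v:ℝ) := by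
    simpa using (pos_iff_ne_zero.mpr hv : 0 < v)
  have hbpos : (0:ℝ) < (2*(v:ℝ))⁻¹ := by positivity
  rw [gaussian_integral_eq hv]
  have heq : (fun x : ℝ => gaussianPDFReal 0 v x * x ^ (2*m))
      = fun x : ℝ => (√(2*π*(v:ℝ)))⁻¹ * (x ^ (2*m) * rexp (-(2*(v:ℝ))⁻¹ * x^2)) := by
    ext x; rw [pdf_zero_eq]; ring
  rw [heq, integral_const_mul, aux_even_int hbpos]
  have hsb : √(π/(2*(v:ℝ))⁻¹) = √(2*π*(v:ℝ)) := by
    congr 1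
    field_simp
  have hbm : ((2*(v:ℝ))⁻¹)^m = ((2*(v:ℝ))^m)⁻¹ := by rw [inv_pow]
  rw [hsb, hbm]
  have h1 : √(2*π*(v:ℝ)) ≠ 0 := by positivity
  have h3 : (Nat.factorial m : ℝ) ≠ 0 := Nat.cast_ne_zero.mpr (Nat.factorial_ne_zero m)
  have h4 : (2*(v:ℝ))^m ≠ 0 := pow_ne_zero _ (by positivity)
  have h5 : (4:ℝ)^m = 2^m * 2^m := by rw [← mul_pow]; norm_num
  field_simp [h5]
  rw [h5, mul_pow]
  ring

lemma centered_odd {v : NNReal} (hv : v ≠ 0) (m : ℕ) :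
    ∫ x, x ^ (2*m+1) ∂(gaussianReal 0 v) = 0 := by
  rw [gaussian_integral_eq hv]
  have heq : (fun x : ℝ => gaussianPDFReal 0 v x * x ^ (2*m+1))
      = fun x : ℝ => (√(2*π*(v:ℝ)))⁻¹ * (x ^ (2*m+1) * rexp (-(2*(v:ℝ))⁻¹ * x^2)) := by
    ext x; rw [pdf_zero_eq]; ring
  rw [heq, integral_const_mul, aux_odd_int]
  ring

theorem stmt_15 (μ : ℝ) (v : NNReal) (n : ℕ) :
    ∫ x : ℝ, x ^ n ∂(gaussianReal μ v) =
    ∑ m ∈ Finset.range (n / 2 + 1),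
      ((n.factorial : ℝ) / ((n - 2 * m).factorial * 2 ^ m * m.factorial)) *
        (v : ℝ) ^ m * μ ^ (n - 2 * m) := by
  by_cases hv : v = 0
  · subst hv
    rw [gaussianReal_zero_var, integral_dirac]
    rw [Finset.sum_eq_single 0]
    · have : (n.factorial : ℝ) ≠ 0 := Nat.cast_ne_zero.mpr (Nat.factorial_ne_zero n)
      field_simp
      simp [mul_comm]
    · intro m _ hm
      simp [zero_pow hm]
    · intro h
      simp at h
  · have hmap : gaussianReal μ v = (gaussianReal 0 v).map (· + μ) := by
      rw [gaussianReal_map_add_const, zero_add]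
    rw [hmap, integral_map (by fun_prop) (by fun_prop)]
    simp_rw [add_pow]
    rw [integral_finset_sum _
      (fun k _ => ((pow_integrable hv k).mul_const _).mul_const _)]
    simp_rw [integral_mul_const]
    rw [← Finset.sum_filter_of_ne (p := fun k => Even k) (by
      intro k _ hne
      by_contra hodd
      obtain ⟨m, rfl⟩ : ∃ m, k = 2*m+1 := by
        rcases Nat.even_or_odd k with h | ⟨m, rfl⟩
        · exact absurd h hodd
        · exact ⟨m, by omega⟩
      rw [centered_odd hv] at hne
      simp at hne)]
    have himg : (Finset.range (n+1)).filter (fun k => Even k)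
        = (Finset.range (n/2+1)).image (fun m => 2*m) := by
      ext k
      simp only [Finset.mem_filter, Finset.mem_range, Finset.mem_image]
      constructor
      · rintro ⟨hk, m, rfl⟩
        exact ⟨m, by omega, by omega⟩
      · rintro ⟨m, hm, rfl⟩
        exact ⟨by omega, m, by omega⟩
    rw [himg, Finset.sum_image (by intro a _ b _ h; simp only at h; omega)]
    refine Finset.sum_congr rfl fun m hm => ?_
    rw [centered_even hv]
    have h2m : 2*m ≤ n := by
      simp only [Finset.mem_range] at hm
      omega
    have hch : (n.choose (2*m) : ℝ) * (2*m).factorial * (n - 2*m).factorial = n.factorial := by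
      exact_mod_cast congrArg Nat.cast (Nat.choose_mul_factorial_mul_factorial h2m)
    rw [← hch]
    have h3 : (Nat.factorial m : ℝ) ≠ 0 := Nat.cast_ne_zero.mpr (Nat.factorial_ne_zero m)
    have h4 : (Nat.factorial (n - 2*m) : ℝ) ≠ 0 :=
      Nat.cast_ne_zero.mpr (Nat.factorial_ne_zero _)
    field_simp
end

section
/- Let ν ≥ 1 be a natural number and let a, a', b, c be nonnegative integers with a ≠ a'. For t = 1,…,ν let u_{t1}, v_{t1}, u_{t2}, v_{t2} be independent Gaussian random variables each with mean 0 and variance 1/2, set z_{t1} = u_{t1} + i·v_{t1} and z_{t2} = u_{t2} + i·v_{t2}, and define w_{11} = Σ_t |z_{t1}|², w_{22} = Σ_t |z_{t2}|², w_{12} = Σ_t z_{t1}·conj(z_{t2}), w_{21} = Σ_t z_{t2}·conj(z_{t1}) = conj(w_{12}). Then the (complex-valued Bochner) expectation E[w_{12}^a · w_{21}^{a'} · w_{11}^b · w_{22}^c] = 0, where the expectation is the integral over (Fin ν) → (ℝ×ℝ)×(ℝ×ℝ) with respect to the product of gaussianReal 0 (1/2) in each real coordinate. -/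
open MeasureTheory ProbabilityTheory Finset Complex

noncomputable section Stmt17Aux

/-- Rotation by a unit complex number, as a measurable equiv of `ℝ × ℝ`. -/
def rotEquiv (c : Circle) : (ℝ × ℝ) ≃ᵐ (ℝ × ℝ) :=
  (Complex.measurableEquivRealProd.symm.trans
    (rotation c).toHomeomorph.toMeasurableEquiv).trans Complex.measurableEquivRealProd

lemma rotEquiv_z (c : Circle) (p : ℝ × ℝ) :
    (((rotEquiv c p).1 : ℂ) + (rotEquiv c p).2 * Complex.I)
      = (c : ℂ) * ((p.1 : ℂ) + p.2 * Complex.I) := by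
  have h : rotEquiv c p
      = (((c : ℂ) * (Complex.measurableEquivRealProd.symm p)).re,
         ((c : ℂ) * (Complex.measurableEquivRealProd.symm p)).im) := rfl
  rw [h]
  rw [Complex.re_add_im]
  congr 1
  rw [Complex.measurableEquivRealProd_symm_apply]
  exact Complex.mk_eq_add_mul_I p.1 p.2

lemma rotEquiv_normSq (c : Circle) (p : ℝ × ℝ) :
    (rotEquiv c p).1 ^ 2 + (rotEquiv c p).2 ^ 2 = p.1 ^ 2 + p.2 ^ 2 := by
  have h1 : Complex.normSq (((rotEquiv c p).1 : ℂ) + (rotEquiv c p).2 * Complex.I)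
      = Complex.normSq ((p.1 : ℂ) + p.2 * Complex.I) := by
    rw [rotEquiv_z, map_mul, Complex.normSq_eq_norm_sq (c : ℂ), Circle.norm_coe]
    simp
  simpa [Complex.normSq_apply, sq] using h1

lemma rotEquiv_volume (c : Circle) :
    MeasurePreserving (rotEquiv c) (volume : Measure (ℝ × ℝ)) volume :=
  Complex.volume_preserving_equiv_real_prod.comp
    (((rotation c).measurePreserving).comp
      Complex.volume_preserving_equiv_real_prod.symm)

/-- The joint density of two independent `gaussianReal 0 (1/2)`. -/
def gdens : ℝ × ℝ → ENNReal := fun p =>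
  gaussianPDF 0 (1 / 2) p.1 * gaussianPDF 0 (1 / 2) p.2

lemma gdens_eq (p : ℝ × ℝ) :
    gdens p = ENNReal.ofReal (((Real.sqrt (2 * Real.pi * (1 / 2)))⁻¹) ^ 2
      * Real.exp (-(p.1 ^ 2 + p.2 ^ 2))) := by
  unfold gdens gaussianPDF
  rw [← ENNReal.ofReal_mul (gaussianPDFReal_nonneg _ _ _)]
  congr 1
  rw [gaussianPDFReal, gaussianPDFReal]
  push_cast
  rw [mul_mul_mul_comm, ← Real.exp_add]
  congr 1
  · rw [sq]
  · congr 1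
    ring

lemma gdens_rot (c : Circle) (p : ℝ × ℝ) : gdens (rotEquiv c p) = gdens p := by
  rw [gdens_eq, gdens_eq, rotEquiv_normSq]

lemma measurable_gdens : Measurable gdens :=
  ((measurable_gaussianPDF 0 (1/2)).comp measurable_fst).mul
    ((measurable_gaussianPDF 0 (1/2)).comp measurable_snd)

lemma prod_gauss_eq : ((gaussianReal 0 (1 / 2)).prod (gaussianReal 0 (1 / 2)))
    = (volume : Measure (ℝ × ℝ)).withDensity gdens := by
  have hv : (1 / 2 : NNReal) ≠ 0 := by norm_num
  refine Measure.prod_eq fun s t hs ht => ?_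
  rw [withDensity_apply _ (hs.prod ht)]
  unfold gdens
  rw [Measure.volume_eq_prod, ← Measure.prod_restrict,
    lintegral_prod_mul (measurable_gaussianPDF 0 (1/2)).aemeasurable
      (measurable_gaussianPDF 0 (1/2)).aemeasurable,
    gaussianReal_apply 0 hv s, gaussianReal_apply 0 hv t]

lemma rot_gauss (c : Circle) :
    MeasurePreserving (rotEquiv c)
      ((gaussianReal 0 (1 / 2)).prod (gaussianReal 0 (1 / 2)))
      ((gaussianReal 0 (1 / 2)).prod (gaussianReal 0 (1 / 2))) := by
  refine ⟨(rotEquiv c).measurable, ?_⟩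
  rw [prod_gauss_eq]
  ext s hs
  rw [Measure.map_apply (rotEquiv c).measurable hs,
    withDensity_apply _ ((rotEquiv c).measurable hs), withDensity_apply _ hs]
  calc ∫⁻ p in rotEquiv c ⁻¹' s, gdens p ∂volume
      = ∫⁻ p in rotEquiv c ⁻¹' s, gdens (rotEquiv c p) ∂volume := by
        simp_rw [gdens_rot]
    _ = ∫⁻ q in s, gdens q ∂volume :=
        (rotEquiv_volume c).setLIntegral_comp_preimage_emb
          (rotEquiv c).measurableEmbedding _ s

end Stmt17Aux

theorem stmt_17 (ν : ℕ) (hν : 1 ≤ ν) (a a' b c : ℕ) (haa' : a ≠ a') :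
    ∫ ω : Fin ν → (ℝ × ℝ) × (ℝ × ℝ),
        (∑ t, (((ω t).1.1 : ℂ) + (ω t).1.2 * Complex.I) *
            (starRingEnd ℂ) (((ω t).2.1 : ℂ) + (ω t).2.2 * Complex.I)) ^ a *
          (∑ t, (((ω t).2.1 : ℂ) + (ω t).2.2 * Complex.I) *
            (starRingEnd ℂ) (((ω t).1.1 : ℂ) + (ω t).1.2 * Complex.I)) ^ a' *
          ((∑ t, ‖((ω t).1.1 : ℂ) + (ω t).1.2 * Complex.I‖ ^ 2 : ℝ) : ℂ) ^ b *
          ((∑ t, ‖((ω t).2.1 : ℂ) + (ω t).2.2 * Complex.I‖ ^ 2 : ℝ) : ℂ) ^ c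
      ∂(Measure.pi fun _ : Fin ν =>
          ((gaussianReal 0 (1 / 2)).prod (gaussianReal 0 (1 / 2))).prod
            ((gaussianReal 0 (1 / 2)).prod (gaussianReal 0 (1 / 2)))) = 0 := by
  classical
  set μ1 : Measure (ℝ × ℝ) := (gaussianReal 0 (1 / 2)).prod (gaussianReal 0 (1 / 2)) with hμ1
  set μ : Measure (Fin ν → (ℝ × ℝ) × (ℝ × ℝ)) :=
    Measure.pi fun _ : Fin ν => μ1.prod μ1 with hμ
  set F : (Fin ν → (ℝ × ℝ) × (ℝ × ℝ)) → ℂ := fun ω =>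
        (∑ t, (((ω t).1.1 : ℂ) + (ω t).1.2 * Complex.I) *
            (starRingEnd ℂ) (((ω t).2.1 : ℂ) + (ω t).2.2 * Complex.I)) ^ a *
          (∑ t, (((ω t).2.1 : ℂ) + (ω t).2.2 * Complex.I) *
            (starRingEnd ℂ) (((ω t).1.1 : ℂ) + (ω t).1.2 * Complex.I)) ^ a' *
          ((∑ t, ‖((ω t).1.1 : ℂ) + (ω t).1.2 * Complex.I‖ ^ 2 : ℝ) : ℂ) ^ b *
          ((∑ t, ‖((ω t).2.1 : ℂ) + (ω t).2.2 * Complex.I‖ ^ 2 : ℝ) : ℂ) ^ c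
    with hF
  show ∫ ω, F ω ∂μ = 0
  have hd : ((a : ℝ) - a') ≠ 0 := sub_ne_zero.mpr (by exact_mod_cast haa')
  set θ : ℝ := Real.pi / (2 * ((a : ℝ) - a')) with hθ
  set cc : Circle := Circle.exp θ with hcc
  have hK : ((cc : ℂ)) ^ a * ((starRingEnd ℂ) (cc : ℂ)) ^ a' = Complex.I := by
    rw [hcc, Circle.coe_exp, ← Complex.exp_conj]
    rw [map_mul, Complex.conj_ofReal, Complex.conj_I]
    rw [← Complex.exp_nat_mul, ← Complex.exp_nat_mul, ← Complex.exp_add]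
    have hθ' : ((a : ℝ) - a') * θ = Real.pi / 2 := by
      rw [hθ]; field_simp
    have h2 : ((((a : ℝ) - a') * θ : ℝ) : ℂ) = ((Real.pi / 2 : ℝ) : ℂ) :=
      congrArg Complex.ofReal hθ'
    have h3 : (a : ℂ) * ((θ : ℂ) * Complex.I) + (a' : ℂ) * ((θ : ℂ) * -Complex.I)
        = (((Real.pi / 2 : ℝ)) : ℂ) * Complex.I := by
      push_cast at h2 ⊢
      linear_combination Complex.I * h2
    rw [h3, Complex.exp_mul_I, ← Complex.ofReal_cos, ← Complex.ofReal_sin,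
      Real.cos_pi_div_two, Real.sin_pi_div_two]
    simp
  set R : (ℝ × ℝ) ≃ᵐ (ℝ × ℝ) := rotEquiv cc with hR
  set T : (Fin ν → (ℝ × ℝ) × (ℝ × ℝ)) ≃ᵐ (Fin ν → (ℝ × ℝ) × (ℝ × ℝ)) :=
    MeasurableEquiv.piCongrRight
      (fun _ => R.prodCongr (MeasurableEquiv.refl (ℝ × ℝ))) with hT
  haveI : IsProbabilityMeasure μ1 := by rw [hμ1]; infer_instance
  haveI : ∀ i : Fin ν, SigmaFinite ((fun _ : Fin ν => μ1.prod μ1) i) := fun i => by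
    infer_instance
  have hTcoe : ⇑T = fun (ω : Fin ν → (ℝ × ℝ) × (ℝ × ℝ)) (i : Fin ν) =>
      (R ((ω i).1), (ω i).2) := rfl
  have hTmp : MeasurePreserving (⇑T) μ μ := by
    rw [hμ, hTcoe]
    exact measurePreserving_pi (fun _ : Fin ν => μ1.prod μ1)
      (fun _ : Fin ν => μ1.prod μ1)
      (fun i => (rot_gauss cc).prod (MeasurePreserving.id μ1))
  have key : ∫ ω, F (T ω) ∂μ = ∫ ω, F ω ∂μ := hTmp.integral_comp' F
  have hpoint : ∀ ω, F (T ω) = Complex.I * F ω := by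
    intro ω
    have hTω : ∀ t, T ω t = (R ((ω t).1), (ω t).2) := fun t => rfl
    have hz : ∀ p : ℝ × ℝ, (((R p).1 : ℂ) + (R p).2 * Complex.I)
        = (cc : ℂ) * ((p.1 : ℂ) + p.2 * Complex.I) := fun p => rotEquiv_z cc p
    simp only [hF, hTω, hz, map_mul, norm_mul, Circle.norm_coe, one_mul]
    have hs1 : (∑ t, ((cc : ℂ) * ((((ω t).1.1 : ℂ)) + (ω t).1.2 * Complex.I)) *
          (starRingEnd ℂ) ((((ω t).2.1 : ℂ)) + (ω t).2.2 * Complex.I))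
        = (cc : ℂ) * ∑ t, ((((ω t).1.1 : ℂ)) + (ω t).1.2 * Complex.I) *
          (starRingEnd ℂ) ((((ω t).2.1 : ℂ)) + (ω t).2.2 * Complex.I) := by
      rw [mul_sum]; exact Finset.sum_congr rfl fun t _ => by ring
    have hs2 : (∑ t, ((((ω t).2.1 : ℂ)) + (ω t).2.2 * Complex.I) *
          ((starRingEnd ℂ) (cc : ℂ) *
            (starRingEnd ℂ) ((((ω t).1.1 : ℂ)) + (ω t).1.2 * Complex.I)))
        = (starRingEnd ℂ) (cc : ℂ) * ∑ t, ((((ω t).2.1 : ℂ)) + (ω t).2.2 * Complex.I) *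
          (starRingEnd ℂ) ((((ω t).1.1 : ℂ)) + (ω t).1.2 * Complex.I) := by
      rw [mul_sum]; exact Finset.sum_congr rfl fun t _ => by ring
    rw [hs1, hs2, mul_pow, mul_pow]
    have hgen : ∀ s1 s2 x y : ℂ,
        (cc : ℂ) ^ a * s1 ^ a * ((starRingEnd ℂ) (cc : ℂ) ^ a' * s2 ^ a') * x ^ b * y ^ c
          = Complex.I * (s1 ^ a * s2 ^ a' * x ^ b * y ^ c) := by
      intro s1 s2 x y
      calc (cc : ℂ) ^ a * s1 ^ a * ((starRingEnd ℂ) (cc : ℂ) ^ a' * s2 ^ a') * x ^ b * y ^ c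
          = ((cc : ℂ) ^ a * (starRingEnd ℂ) (cc : ℂ) ^ a')
              * (s1 ^ a * s2 ^ a' * x ^ b * y ^ c) := by ring
        _ = Complex.I * (s1 ^ a * s2 ^ a' * x ^ b * y ^ c) := by rw [hK]
    exact hgen _ _ _ _
  have hI : ∫ ω, F ω ∂μ = Complex.I * ∫ ω, F ω ∂μ := by
    calc ∫ ω, F ω ∂μ = ∫ ω, F (T ω) ∂μ := key.symm
      _ = ∫ ω, Complex.I * F ω ∂μ := by simp_rw [hpoint]
      _ = Complex.I * ∫ ω, F ω ∂μ := integral_const_mul _ _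
  have h0 : (1 - Complex.I) * ∫ ω, F ω ∂μ = 0 := by linear_combination hI
  rcases mul_eq_zero.mp h0 with h | h
  · exfalso
    have h1 : (1 : ℂ) = Complex.I := sub_eq_zero.mp h
    have := congrArg Complex.im h1
    simp at this
  · exact h
end

section
/- For every real number ν and all natural numbers a and c: Σ_{a'=0}^{min(a,c)} C(c, a') · (∏_{i=1}^{c−a'} (ν + 2(c−i))) · 2^{a'} · (a! / (a−a')!) = ∏_{i=1}^{c} (ν + 2(a+c−i)). -/
open Finset

noncomputable def ff (y : ℝ) (n : ℕ) : ℝ := ∏ i ∈ Finset.range n, (y - 2 * i)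

lemma ff_succ (y : ℝ) (n : ℕ) : ff y (n + 1) = ff y n * (y - 2 * n) :=
  Finset.prod_range_succ _ _

lemma vand (y z : ℝ) (c : ℕ) :
    ∑ k ∈ range (c + 1), (c.choose k : ℝ) * ff y (c - k) * ff z k = ff (y + z) c := by
  induction c with
  | zero => simp [ff]
  | succ c ih =>
    have hA : ∑ k ∈ range (c + 1), (c.choose k : ℝ) * ff y (c - k + 1) * ff z k
        = ff y (c + 1)
          + ∑ k ∈ range (c + 1), (c.choose (k + 1) : ℝ) * ff y (c - k) * ff z (k + 1) := by
      rw [Finset.sum_range_succ' (fun k => (c.choose k : ℝ) * ff y (c - k + 1) * ff z k) c,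
        Finset.sum_range_succ (fun k => (c.choose (k + 1) : ℝ) * ff y (c - k) * ff z (k + 1)) c]
      simp only [Nat.choose_succ_self, Nat.cast_zero, zero_mul, add_zero, Nat.choose_zero_right,
        Nat.cast_one, one_mul, Nat.sub_zero, ff, Finset.prod_range_zero, mul_one]
      rw [add_comm]
      congr 1
      apply Finset.sum_congr rfl
      intro i hi
      have hi' : i < c := Finset.mem_range.mp hi
      rw [show c - (i + 1) + 1 = c - i from by omega]
    -- expand the LHS of the goal
    rw [Finset.sum_range_succ' (fun k => ((c + 1).choose k : ℝ) * ff y (c + 1 - k) * ff z k) (c + 1)]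
    have hsplit : ∀ k ∈ range (c + 1),
        ((c + 1).choose (k + 1) : ℝ) * ff y (c + 1 - (k + 1)) * ff z (k + 1)
        = (c.choose k : ℝ) * ff y (c - k) * ff z (k + 1)
          + (c.choose (k + 1) : ℝ) * ff y (c - k) * ff z (k + 1) := by
      intro k hk
      rw [Nat.choose_succ_succ, Nat.succ_sub_succ]
      push_cast
      ring
    rw [Finset.sum_congr rfl hsplit, Finset.sum_add_distrib]
    have hrhs : ff (y + z) (c + 1)
        = ∑ k ∈ range (c + 1), (c.choose k : ℝ) * ff y (c - k + 1) * ff z k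
          + ∑ k ∈ range (c + 1), (c.choose k : ℝ) * ff y (c - k) * ff z (k + 1) := by
      rw [ff_succ, ← ih, Finset.sum_mul, ← Finset.sum_add_distrib]
      apply Finset.sum_congr rfl
      intro k hk
      have hk' : k ≤ c := by have := Finset.mem_range.mp hk; omega
      have hcast : ((c - k : ℕ) : ℝ) = (c : ℝ) - k := by
        rw [Nat.cast_sub hk']
      rw [ff_succ y (c - k), ff_succ z k, hcast]
      ring
    rw [hrhs, hA]
    simp only [Nat.choose_zero_right, Nat.cast_one, one_mul, ff, Finset.prod_range_zero, mul_one,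
      Nat.sub_zero]
    ring

lemma hprod (ν x : ℝ) (k : ℕ) :
    ∏ i ∈ Finset.Icc 1 k, (ν + 2 * (x - (i : ℝ))) = ff (ν + 2 * x - 2) k := by
  induction k with
  | zero => simp [ff]
  | succ k ih =>
    rw [Finset.prod_Icc_succ_top (by omega : 1 ≤ k + 1), ih, ff_succ]
    push_cast
    ring

lemma hdesc (a : ℕ) : ∀ a' : ℕ, a' ≤ a →
    (2 : ℝ) ^ a' * ((a.factorial : ℝ) / (a - a').factorial) = ff (2 * a) a' := by
  intro a'
  induction a' with
  | zero => intro _; simp [ff, Nat.factorial_ne_zero]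
  | succ a' ih =>
    intro h
    have h' : a' ≤ a := by omega
    rw [ff_succ, ← ih h']
    have h1 : a - a' = (a - (a' + 1)) + 1 := by omega
    have h2 : ((a - a' : ℕ) : ℝ) = (a : ℝ) - a' := by rw [Nat.cast_sub h']
    rw [h1, Nat.factorial_succ]
    have h3 : ((a - (a' + 1) : ℕ) : ℝ) = (a : ℝ) - a' - 1 := by
      rw [Nat.cast_sub h]; push_cast; ring
    have hne : ((a - (a' + 1)).factorial : ℝ) ≠ 0 := Nat.cast_ne_zero.mpr (Nat.factorial_ne_zero _)
    have hne2 : ((a - (a' + 1) : ℕ) : ℝ) + 1 ≠ 0 := by positivity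
    have h4 : 2 * (a : ℝ) - 2 * (a' : ℝ) = 2 * (((a - (a' + 1) : ℕ) : ℝ) + 1) := by
      rw [h3]; ring
    push_cast
    rw [h4]
    have e : (a.factorial : ℝ) / ((((a - (a' + 1) : ℕ) : ℝ) + 1) * ((a - (a' + 1)).factorial : ℝ))
        * (((a - (a' + 1) : ℕ) : ℝ) + 1) = (a.factorial : ℝ) / ((a - (a' + 1)).factorial : ℝ) := by
      rw [mul_comm (((a - (a' + 1) : ℕ) : ℝ) + 1), ← div_div, div_mul_cancel₀ _ hne2]
    linear_combination (-(2 : ℝ) ^ a' * 2) * e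

lemma ffzero (a n : ℕ) (h : a < n) : ff (2 * (a : ℝ)) n = 0 :=
  Finset.prod_eq_zero (Finset.mem_range.mpr h) (by ring)

theorem stmt_18 (ν : ℝ) (a c : ℕ) :
    ∑ a' ∈ Finset.range (min a c + 1),
      (c.choose a' : ℝ) * (∏ i ∈ Finset.Icc 1 (c - a'), (ν + 2 * ((c : ℝ) - (i : ℝ)))) *
        2 ^ a' * ((a.factorial : ℝ) / (a - a').factorial) =
    ∏ i ∈ Finset.Icc 1 c, (ν + 2 * ((a : ℝ) + (c : ℝ) - (i : ℝ))) := by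
  have key : ∑ a' ∈ Finset.range (min a c + 1),
      (c.choose a' : ℝ) * (∏ i ∈ Finset.Icc 1 (c - a'), (ν + 2 * ((c : ℝ) - (i : ℝ)))) *
        2 ^ a' * ((a.factorial : ℝ) / (a - a').factorial)
      = ∑ a' ∈ Finset.range (min a c + 1),
        (c.choose a' : ℝ) * ff (ν + 2 * c - 2) (c - a') * ff (2 * a) a' := by
    apply Finset.sum_congr rfl
    intro a' ha'
    have haa : a' ≤ a := by have := Finset.mem_range.mp ha'; omega
    rw [hprod ν (c : ℝ) (c - a'), ← hdesc a a' haa]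
    ring
  rw [key]
  have key2 : ∑ a' ∈ Finset.range (min a c + 1),
      (c.choose a' : ℝ) * ff (ν + 2 * c - 2) (c - a') * ff (2 * a) a'
      = ∑ a' ∈ Finset.range (c + 1),
        (c.choose a' : ℝ) * ff (ν + 2 * c - 2) (c - a') * ff (2 * a) a' := by
    apply Finset.sum_subset (Finset.range_subset_range.mpr (by omega))
    intro x hx hnx
    have hx' : x < c + 1 := Finset.mem_range.mp hx
    have hnx' : ¬ x < min a c + 1 := fun h => hnx (Finset.mem_range.mpr h)
    have : a < x := by omega
    rw [ffzero a x this, mul_zero]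
  rw [key2, vand (ν + 2 * c - 2) (2 * a) c, hprod ν ((a : ℝ) + (c : ℝ)) c]
  congr 1
  ring
end
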